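/- arXiv:2110.08054 — 6 statements merged into one kernel-verified Lean document; each statement's English description precedes it below -/
import Mathlib

section
/- Let y_1(t),…,y_l(t) be time-varying unit vectors in ℝ³ and define Q(t) := Σ_{i=1}^{l} π_{y_i(t)}. If there exist indices i ≠ j and ε₁ > 0 such that |y_i(t)ᵀ y_j(t)| ≤ 1 − ε₁ for all t ≥ 0 (i.e. two of the directions are uniformly non-collinear), then Q(t) is persistently exciting: there exist T > 0 and μ > 0 such that (1/T)∫_t^{t+T} Q(τ) dτ ≥ μ I₃ for all t ≥ 0. -/
open Matrix MeasureTheory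

noncomputable section

/-- Projector onto the plane orthogonal to the unit vector `y`: `π_y = I₃ - y yᵀ`. -/
def proj (y : Fin 3 → ℝ) : Matrix (Fin 3) (Fin 3) ℝ := 1 - Matrix.vecMulVec y y

/-- A time-varying positive semidefinite matrix `Σ(t)` is persistently exciting with
constants `T, μ` if `(1/T) ∫_t^{t+T} Σ(τ) dτ ≥ μ I` for all `t ≥ 0`. -/
def IsPEWith {ι : Type*} [Fintype ι] [DecidableEq ι]
    (M : ℝ → Matrix ι ι ℝ) (T μ : ℝ) : Prop :=
  0 < T ∧ 0 < μ ∧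
    ∀ t : ℝ, 0 ≤ t →
      ((T⁻¹ • Matrix.of fun i j => ∫ τ in t..(t + T), M τ i j) -
        μ • (1 : Matrix ι ι ℝ)).PosSemidef

/-!
Pointwise in time, `xᵀ (π_a + π_b) x = 2‖x‖² - (a ⬝ x)² - (b ⬝ x)² ≥ (1 - |a ⬝ b|) ‖x‖²` for unit
vectors `a, b`, because the Gram matrix of `a, b` has largest eigenvalue `1 + |a ⬝ b|`. The
remaining projectors are positive semidefinite, so `Q(t) ≥ ε₁ I` for every `t ≥ 0`, and such a
pointwise bound survives averaging over any window: `Q` is persistently exciting with `T = 1`,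
`μ = ε₁`.
-/

theorem dotProduct_sq_le_dotProduct_self_mul {ι : Type*} [Fintype ι] (v w : ι → ℝ) :
    (v ⬝ᵥ w) ^ 2 ≤ (v ⬝ᵥ v) * (w ⬝ᵥ w) := by
  simpa only [dotProduct, sq] using Finset.sum_mul_sq_le_sq_mul_sq Finset.univ v w

theorem abs_apply_le_one_of_dotProduct_self_eq_one {ι : Type*} [Fintype ι] {v : ι → ℝ}
    (hv : v ⬝ᵥ v = 1) (i : ι) : |v i| ≤ 1 := by
  rw [abs_le_one_iff_mul_self_le_one, ← hv]
  exact Finset.single_le_sum (f := fun j => v j * v j) (fun j _ => mul_self_nonneg (v j))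
    (Finset.mem_univ i)

theorem sq_dotProduct_add_sq_dotProduct_le {ι : Type*} [Fintype ι] {a b : ι → ℝ}
    (ha : a ⬝ᵥ a = 1) (hb : b ⬝ᵥ b = 1) (x : ι → ℝ) :
    (a ⬝ᵥ x) ^ 2 + (b ⬝ᵥ x) ^ 2 ≤ (1 + |a ⬝ᵥ b|) * (x ⬝ᵥ x) := by
  set s := a ⬝ᵥ x
  set u := b ⬝ᵥ x
  set c := a ⬝ᵥ b
  -- Cauchy–Schwarz against `w = s a + u b`, whose squared length is `s² + u² + 2csu`.
  set w := s • a + u • b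
  have hwx : w ⬝ᵥ x = s ^ 2 + u ^ 2 := by
    simp only [w, add_dotProduct, smul_dotProduct, smul_eq_mul]; ring
  have hww : w ⬝ᵥ w ≤ (1 + |c|) * (s ^ 2 + u ^ 2) := by
    have hw : w ⬝ᵥ w = s ^ 2 + u ^ 2 + 2 * c * s * u := by
      simp only [w, add_dotProduct, dotProduct_add, smul_dotProduct, dotProduct_smul,
        smul_eq_mul, ha, hb, dotProduct_comm b a]
      ring
    have hcross : 2 * c * s * u ≤ |c| * (s ^ 2 + u ^ 2) := by
      nlinarith [neg_abs_le c, le_abs_self c, abs_nonneg c, sq_nonneg (s - u), sq_nonneg (s + u)]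
    linarith
  have hcs := dotProduct_sq_le_dotProduct_self_mul w x
  rw [hwx] at hcs
  have hx : 0 ≤ x ⬝ᵥ x := by simpa using dotProduct_star_self_nonneg x
  rcases (add_nonneg (sq_nonneg s) (sq_nonneg u)).eq_or_lt with hzero | hpos
  · rw [← hzero]; positivity
  · nlinarith [mul_le_mul_of_nonneg_right hww hx]

theorem dotProduct_proj_mulVec (a x : Fin 3 → ℝ) :
    x ⬝ᵥ (proj a *ᵥ x) = x ⬝ᵥ x - (a ⬝ᵥ x) ^ 2 := by
  rw [proj, sub_mulVec, one_mulVec, dotProduct_sub, vecMulVec_mulVec, dotProduct_smul,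
    op_smul_eq_smul, smul_eq_mul, dotProduct_comm x a, sq]

theorem isHermitian_proj (a : Fin 3 → ℝ) : (proj a).IsHermitian :=
  isHermitian_one.sub (by simp [IsHermitian])

theorem posSemidef_proj {a : Fin 3 → ℝ} (ha : a ⬝ᵥ a = 1) : (proj a).PosSemidef := by
  refine .of_dotProduct_mulVec_nonneg (isHermitian_proj a) fun x => ?_
  have hcs := dotProduct_sq_le_dotProduct_self_mul a x
  rw [ha, one_mul] at hcs
  rw [star_trivial, dotProduct_proj_mulVec]
  linarith

theorem posSemidef_proj_add_proj_sub_smul_one {a b : Fin 3 → ℝ} (ha : a ⬝ᵥ a = 1)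
    (hb : b ⬝ᵥ b = 1) {ε : ℝ} (hab : |a ⬝ᵥ b| ≤ 1 - ε) :
    (proj a + proj b - ε • 1).PosSemidef := by
  have hherm := ((isHermitian_proj a).add (isHermitian_proj b)).sub (isHermitian_one.smul (.all ε))
  refine .of_dotProduct_mulVec_nonneg hherm fun x => ?_
  have hgram := sq_dotProduct_add_sq_dotProduct_le ha hb x
  have hx : 0 ≤ x ⬝ᵥ x := by simpa using dotProduct_star_self_nonneg x
  rw [star_trivial, sub_mulVec, add_mulVec, dotProduct_sub, dotProduct_add,
    dotProduct_proj_mulVec, dotProduct_proj_mulVec, smul_mulVec, one_mulVec, dotProduct_smul,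
    smul_eq_mul]
  nlinarith [mul_le_mul_of_nonneg_right hab hx]

theorem posSemidef_sum_proj_sub_smul_one {ι : Type*} [Fintype ι] {v : ι → Fin 3 → ℝ}
    (hv : ∀ k, v k ⬝ᵥ v k = 1) {i j : ι} (hij : i ≠ j) {ε : ℝ} (hε : |v i ⬝ᵥ v j| ≤ 1 - ε) :
    (∑ k, proj (v k) - ε • 1).PosSemidef := by
  classical
  rw [← Finset.sum_add_sum_compl {i, j}, Finset.sum_pair hij, add_sub_right_comm]
  exact (posSemidef_proj_add_proj_sub_smul_one (hv i) (hv j) hε).add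
    (posSemidef_sum _ fun k _ => posSemidef_proj (hv k))

section IntervalIntegral

variable {ι : Type*} [Fintype ι] {M : ℝ → Matrix ι ι ℝ} {a b : ℝ}

theorem dotProduct_intervalIntegral_mulVec
    (hM : ∀ i j, IntervalIntegrable (fun τ => M τ i j) volume a b) (x : ι → ℝ) :
    x ⬝ᵥ (of (fun i j => ∫ τ in a..b, M τ i j) *ᵥ x) = ∫ τ in a..b, x ⬝ᵥ (M τ *ᵥ x) := by
  have hMx : ∀ i j, IntervalIntegrable (fun τ => x i * (M τ i j * x j)) volume a b :=
    fun i j => ((hM i j).mul_const _).const_mul _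
  have hrow : ∀ i, IntervalIntegrable (fun τ => ∑ j, x i * (M τ i j * x j)) volume a b :=
    fun i => by simpa only [Finset.sum_fn] using IntervalIntegrable.sum _ fun j _ => hMx i j
  simp only [dotProduct, mulVec, of_apply, Finset.mul_sum]
  rw [intervalIntegral.integral_finsetSum fun i _ => hrow i]
  refine Finset.sum_congr rfl fun i _ => ?_
  rw [intervalIntegral.integral_finsetSum fun j _ => hMx i j]
  refine Finset.sum_congr rfl fun j _ => ?_
  rw [intervalIntegral.integral_const_mul, intervalIntegral.integral_mul_const]

theorem posSemidef_intervalIntegral (hab : a ≤ b)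
    (hM : ∀ i j, IntervalIntegrable (fun τ => M τ i j) volume a b)
    (hpos : ∀ τ ∈ Set.Icc a b, (M τ).PosSemidef) :
    (of fun i j => ∫ τ in a..b, M τ i j).PosSemidef := by
  refine .of_dotProduct_mulVec_nonneg ?_ fun x => ?_
  · ext i j
    simp only [conjTranspose_apply, of_apply, star_trivial]
    refine intervalIntegral.integral_congr fun τ hτ => ?_
    rw [Set.uIcc_of_le hab] at hτ
    exact (hpos τ hτ).isHermitian.apply i j
  · rw [star_trivial, dotProduct_intervalIntegral_mulVec hM]
    exact intervalIntegral.integral_nonneg hab fun τ hτ => by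
      simpa using (hpos τ hτ).dotProduct_mulVec_nonneg x

theorem isPEWith_of_posSemidef_sub_smul_one [DecidableEq ι] {T μ : ℝ} (hT : 0 < T) (hμ : 0 < μ)
    (hM : ∀ t i j, IntervalIntegrable (fun τ => M τ i j) volume t (t + T))
    (hpos : ∀ t, 0 ≤ t → (M t - μ • 1).PosSemidef) : IsPEWith M T μ := by
  refine ⟨hT, hμ, fun t ht => ?_⟩
  -- `μ I` is the time average of the constant `μ I`, so the matrix is an average of `M τ - μ I`.
  have havg := posSemidef_intervalIntegral (by linarith)
    (fun i j => (hM t i j).sub intervalIntegrable_const) fun τ hτ => hpos τ (ht.trans hτ.1)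
  convert havg.smul (inv_nonneg.mpr hT.le) using 1
  ext i j
  simp only [Matrix.sub_apply, Matrix.smul_apply, of_apply, smul_eq_mul]
  rw [intervalIntegral.integral_sub (hM t i j) intervalIntegrable_const,
    intervalIntegral.integral_const, add_sub_cancel_left, smul_eq_mul]
  field_simp

end IntervalIntegral

theorem intervalIntegrable_proj_apply {y : ℝ → Fin 3 → ℝ} (hunit : ∀ t, y t ⬝ᵥ y t = 1)
    (hmeas : Measurable y) (i j : Fin 3) (a b : ℝ) :
    IntervalIntegrable (fun τ => proj (y τ) i j) volume a b := by
  simp only [proj, Matrix.sub_apply, vecMulVec_apply]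
  refine intervalIntegrable_const.sub ?_
  refine (intervalIntegrable_const (c := (1 : ℝ))).mono_fun'
    (hmeas.eval.mul hmeas.eval).aestronglyMeasurable
    (Filter.Eventually.of_forall fun τ => show |_| ≤ 1 from ?_)
  rw [abs_mul]
  exact mul_le_one₀ (abs_apply_le_one_of_dotProduct_self_eq_one (hunit τ) i) (abs_nonneg _)
    (abs_apply_le_one_of_dotProduct_self_eq_one (hunit τ) j)

/-- if two of the time-varying unit directions `y i`, `y j` (`i ≠ j`) are
uniformly non-collinear, i.e. `|y_i(t)ᵀ y_j(t)| ≤ 1 - ε₁` for all `t ≥ 0`, then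
`Q(t) = Σ_i π_{y_i(t)}` is persistently exciting. -/
theorem stmt1 (l : ℕ) (y : Fin l → ℝ → (Fin 3 → ℝ))
    (hunit : ∀ i t, y i t ⬝ᵥ y i t = 1)
    (hmeas : ∀ i, Measurable fun t => y i t)
    (hnoncol : ∃ i j : Fin l, i ≠ j ∧ ∃ ε₁ : ℝ, 0 < ε₁ ∧
      ∀ t : ℝ, 0 ≤ t → |y i t ⬝ᵥ y j t| ≤ 1 - ε₁) :
    ∃ T μ : ℝ, IsPEWith (fun t => ∑ i, proj (y i t)) T μ := by
  obtain ⟨i, j, hij, ε, hε, hcol⟩ := hnoncol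
  have hint : ∀ t a b,
      IntervalIntegrable (fun τ => (∑ k, proj (y k τ)) a b) volume t (t + 1) := fun t a b => by
    simpa only [Matrix.sum_apply, Finset.sum_fn] using IntervalIntegrable.sum _ fun k _ =>
      intervalIntegrable_proj_apply (hunit k) (hmeas k) a b t (t + 1)
  exact ⟨1, ε, isPEWith_of_posSemidef_sub_smul_one one_pos hε hint
    fun t ht => posSemidef_sum_proj_sub_smul_one (fun k => hunit k t) hij (hcol t ht)⟩
end
end

section
/- Consider the cascaded closed-loop error system of an n-agent leader-follower formation, in which for each agent i ∈ {2,…,n} and j ∈ N_i the error satisfies ẋ̃_{ij} = −A_i(g_i(t)) x̃_{ij} + Σ_{2≤k≤i−1, m∈N_k} B_{km}(t) x̃_{km} with each B_{km}(t) bounded, and suppose that for each i the state-transition matrix of the unforced system ẋ̃ = −A_i(g_i(t)) x̃ decays exponentially with rate greater than b_i > 0. Then the errors of agent 2 decay with rate greater than c_2 = b_2, and for each i ≥ 3 the errors x̃_{ij}(t) of agent i in the cascaded system decay exponentially with rate greater than c_i = (1/2)·min{c_{i−1}, b_i}. In particular, if b_i = b for all i, then the errors of agent i decay with rate greater than b/2^{i−2}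 for every i ≥ 3 (with rate b for i = 2). -/
/-!
Along a solution of `ẋ = -A(t) x + f(t)`, the function `σ ↦ Φ(t,σ) x(σ)` has derivative
`Φ(t,σ) f(σ)`: the derivative of `Φ(t,σ)` in `σ` is obtained by inverting `Φ(σ,t)`, using the
cocycle identity `Φ(t,s) Φ(s,r) = Φ(t,r)`, which holds by uniqueness for the linear ODE with
bounded `A`. Integrating over `[0,t]`, if `Φ` decays at rate `b` and `f` at rate `c' > c` with
`c ≤ b`, then `‖x(t)‖ ≤ k e^{-bt} ‖x(0)‖ + k M e^{-ct} / (c' - c)`, so `x` decays at rate `c`.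
By strong induction along the cascade, the forcing of agent `i` is a bounded combination of the
errors of agents `2, …, i-1`, which decay at rate at least `c_{i-1} > c_i`. Hence any rates with
`c_i ≤ b_i`, strictly decreasing in `i`, work; halving the minimum and `b / 2^{i-2}` are two
instances.
-/

open Matrix

noncomputable section

/-- Euclidean norm of a finite-dimensional real vector. -/
def euclNorm {ι : Type*} [Fintype ι] (x : ι → ℝ) : ℝ := Real.sqrt (∑ i, x i * x i)

open Set Real

theorem euclNorm_eq_norm_toLp {ι : Type*} [Fintype ι] (x : ι → ℝ) :
    euclNorm x = ‖WithLp.toLp 2 x‖ := by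
  simp [euclNorm, EuclideanSpace.norm_eq, sq]

theorem lipschitzWith_mulVec_of_abs_le {ι : Type*} [Fintype ι] {M : Matrix ι ι ℝ} {C : ℝ}
    (hM : ∀ a b, |M a b| ≤ C) :
    LipschitzWith (Fintype.card ι * C).toNNReal (fun y : ι → ℝ => M *ᵥ y) := by
  refine LipschitzWith.of_dist_le_mul fun y z => ?_
  rw [dist_eq_norm, dist_eq_norm, ← Matrix.mulVec_sub]
  refine (pi_norm_le_iff_of_nonneg (by positivity)).2 fun a => ?_
  calc ‖(M *ᵥ (y - z)) a‖ ≤ ∑ b, |M a b| * ‖y - z‖ := by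
        rw [Real.norm_eq_abs, Matrix.mulVec, dotProduct]
        refine (Finset.abs_sum_le_sum_abs _ _).trans (Finset.sum_le_sum fun b _ => ?_)
        rw [abs_mul]
        exact mul_le_mul_of_nonneg_left (norm_le_pi_norm (y - z) b) (abs_nonneg _)
    _ ≤ ∑ _b : ι, C * ‖y - z‖ := by gcongr with b; exact hM a b
    _ ≤ _ := by
        rw [Finset.sum_const, Finset.card_univ, nsmul_eq_mul, ← mul_assoc]
        gcongr
        exact Real.le_coe_toNNReal _

theorem hasDerivAt_toEuclideanCLM {ι : Type*} [Fintype ι] [DecidableEq ι]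
    {P : ℝ → Matrix ι ι ℝ} {D : Matrix ι ι ℝ} {t : ℝ}
    (h : ∀ z, HasDerivAt (fun τ => P τ *ᵥ z) (D *ᵥ z) t) :
    HasDerivAt (fun τ => toEuclideanCLM (𝕜 := ℝ) (P τ)) (toEuclideanCLM (𝕜 := ℝ) D) t := by
  have expand : ∀ M : Matrix ι ι ℝ, toEuclideanCLM (𝕜 := ℝ) M =
      ∑ a, ∑ b, M a b • toEuclideanCLM (𝕜 := ℝ) (single a b 1) := fun M => by
    have hM : M = ∑ a, ∑ b, M a b • single a b (1 : ℝ) := by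
      simpa only [Matrix.smul_single, smul_eq_mul, mul_one] using Matrix.matrix_eq_sum_single M
    conv_lhs => rw [hM]
    simp only [map_sum, map_smul]
  have entry : ∀ a b, HasDerivAt (fun τ => P τ a b) (D a b) t := fun a b => by
    simpa [Matrix.mulVec_single] using hasDerivAt_pi.1 (h (Pi.single b 1)) a
  rw [funext fun τ => expand (P τ), expand D]
  exact HasDerivAt.fun_sum fun a _ => HasDerivAt.fun_sum fun b _ =>
    (entry a b).smul_const (toEuclideanCLM (𝕜 := ℝ) (single a b (1 : ℝ)))

theorem norm_sub_le_of_norm_deriv_le_exp {E : Type*} [NormedAddCommGroup E] [NormedSpace ℝ E]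
    {u u' : ℝ → E} {M β t : ℝ} (hβ : 0 < β) (ht : 0 ≤ t)
    (hu : ∀ σ ∈ Icc 0 t, HasDerivAt u (u' σ) σ)
    (hbound : ∀ σ ∈ Icc 0 t, ‖u' σ‖ ≤ M * exp (-β * σ)) :
    ‖u t - u 0‖ ≤ M / β := by
  have hM : 0 ≤ M := by
    simpa using (norm_nonneg _).trans (hbound 0 ⟨le_rfl, ht⟩)
  have hB : ∀ σ, HasDerivAt (fun σ => M / β * (1 - exp (-β * σ))) (M * exp (-β * σ)) σ :=
    fun σ => by
      refine ((((hasDerivAt_id' σ).const_mul (-β)).exp.const_sub 1).const_mul (M / β)).congr_deriv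
        ?_
      field_simp
  have key := image_norm_le_of_norm_deriv_right_le_deriv_boundary
    (f := fun σ => u σ - u 0) (a := 0) (b := t)
    (fun σ hσ => ((hu σ hσ).continuousAt.sub continuousAt_const).continuousWithinAt)
    (fun σ hσ => ((hu σ (Ico_subset_Icc_self hσ)).sub_const (u 0)).hasDerivWithinAt)
    (by simp) hB (fun σ hσ => hbound σ (Ico_subset_Icc_self hσ))
    ⟨ht, le_rfl⟩
  refine key.trans ?_
  have := mul_nonneg (div_nonneg hM hβ.le) (exp_pos (-β * t)).le
  linarith [mul_sub (M / β) 1 (exp (-β * t))]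

def ExpDecay {ι : Type*} [Fintype ι] (c : ℝ) (y : ℝ → ι → ℝ) : Prop :=
  ∃ K : ℝ, 0 < K ∧ ∀ t : ℝ, 0 ≤ t → euclNorm (y t) ≤ K * exp (-c * t)

namespace ExpDecay

variable {ι : Type*} [Fintype ι] {c : ℝ} {y z : ℝ → ι → ℝ}

theorem zero (c : ℝ) : ExpDecay c (0 : ℝ → ι → ℝ) :=
  ⟨1, one_pos, fun t _ => by simp [euclNorm_eq_norm_toLp]; positivity⟩

theorem add (hy : ExpDecay c y) (hz : ExpDecay c z) : ExpDecay c (y + z) := by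
  obtain ⟨K, hK, hy⟩ := hy
  obtain ⟨L, hL, hz⟩ := hz
  refine ⟨K + L, add_pos hK hL, fun t ht => ?_⟩
  simp only [Pi.add_apply, euclNorm_eq_norm_toLp, WithLp.toLp_add] at *
  grw [norm_add_le, hy t ht, hz t ht, add_mul]

theorem sum {α : Type*} {s : Finset α} {y : α → ℝ → ι → ℝ} (hy : ∀ a ∈ s, ExpDecay c (y a)) :
    ExpDecay c (fun t => ∑ a ∈ s, y a t) := by
  rw [← Finset.sum_fn]
  exact Finset.sum_induction _ _ (fun _ _ => add) (zero c) hy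

theorem mono (hy : ExpDecay c y) {c' : ℝ} (hc : c' ≤ c) : ExpDecay c' y := by
  obtain ⟨K, hK, hy⟩ := hy
  refine ⟨K, hK, fun t ht => (hy t ht).trans ?_⟩
  gcongr

theorem mulVec {B : ℝ → Matrix ι ι ℝ} {M : ℝ}
    (hB : ∀ t, 0 ≤ t → ∀ v, euclNorm (B t *ᵥ v) ≤ M * euclNorm v) (hy : ExpDecay c y) :
    ExpDecay c (fun t => B t *ᵥ y t) := by
  obtain ⟨K, hK, hy⟩ := hy
  refine ⟨(|M| + 1) * K, by positivity, fun t ht => ?_⟩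
  have hnorm : 0 ≤ euclNorm (y t) := Real.sqrt_nonneg _
  calc euclNorm (B t *ᵥ y t) ≤ M * euclNorm (y t) := hB t ht _
    _ ≤ (|M| + 1) * euclNorm (y t) := by gcongr; linarith [le_abs_self M]
    _ ≤ (|M| + 1) * K * exp (-c * t) := by rw [mul_assoc]; gcongr; exact hy t ht

end ExpDecay

structure IsStateTransition {ι : Type*} [Fintype ι] [DecidableEq ι] (A : ℝ → Matrix ι ι ℝ)
    (Φ : ℝ → ℝ → Matrix ι ι ℝ) : Prop where
  apply_self : ∀ s, Φ s s = 1
  hasDerivAt : ∀ s t (z : ι → ℝ), HasDerivAt (fun τ => Φ τ s *ᵥ z) (-((A t * Φ t s) *ᵥ z)) t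

namespace IsStateTransition

variable {ι : Type*} [Fintype ι] [DecidableEq ι] {A : ℝ → Matrix ι ι ℝ} {Φ : ℝ → ℝ → Matrix ι ι ℝ}
  {C : ℝ}

theorem hasDerivAt_mulVec (hΦ : IsStateTransition A Φ) (s τ : ℝ) (z : ι → ℝ) :
    HasDerivAt (fun τ => Φ τ s *ᵥ z) (-(A τ *ᵥ (Φ τ s *ᵥ z))) τ := by
  simpa [Matrix.mulVec_mulVec] using hΦ.hasDerivAt s τ z

theorem cocycle_mulVec (hΦ : IsStateTransition A Φ) (hA : ∀ t a b, |A t a b| ≤ C)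
    (r s t : ℝ) (z : ι → ℝ) : Φ t s *ᵥ (Φ s r *ᵥ z) = Φ t r *ᵥ z := by
  have hLip : ∀ τ, LipschitzWith (Fintype.card ι * C).toNNReal (fun y : ι → ℝ => -(A τ *ᵥ y)) :=
    fun τ => (lipschitzWith_mulVec_of_abs_le (hA τ)).neg
  have := ODE_solution_unique_univ (v := fun τ y => -(A τ *ᵥ y)) (s := fun _ => univ) (t₀ := s)
    (fun τ => (hLip τ).lipschitzOnWith) (fun τ => ⟨hΦ.hasDerivAt_mulVec s τ (Φ s r *ᵥ z), trivial⟩)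
    (fun τ => ⟨hΦ.hasDerivAt_mulVec r τ z, trivial⟩) (by simp [hΦ.apply_self])
  exact congrFun this t

theorem cocycle (hΦ : IsStateTransition A Φ) (hA : ∀ t a b, |A t a b| ≤ C) (r s t : ℝ) :
    Φ t s * Φ s r = Φ t r :=
  Matrix.toLin'.injective <| LinearMap.ext fun z => by
    simpa [Matrix.toLin'_apply, Matrix.mulVec_mulVec] using hΦ.cocycle_mulVec hA r s t z

theorem hasDerivAt_toEuclideanCLM_right (hΦ : IsStateTransition A Φ)
    (hA : ∀ t a b, |A t a b| ≤ C) (t σ : ℝ) :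
    HasDerivAt (fun τ => toEuclideanCLM (𝕜 := ℝ) (Φ t τ))
      (toEuclideanCLM (𝕜 := ℝ) (Φ t σ * A σ)) σ := by
  have hmul : ∀ r s, toEuclideanCLM (𝕜 := ℝ) (Φ r s) * toEuclideanCLM (𝕜 := ℝ) (Φ s r) = 1 :=
    fun r s => by rw [← map_mul, hΦ.cocycle hA, hΦ.apply_self, map_one]
  let u : ℝ → (EuclideanSpace ℝ ι →L[ℝ] EuclideanSpace ℝ ι)ˣ :=
    fun τ => ⟨_, _, hmul τ t, hmul t τ⟩
  have hinv : Ring.inverse ∘ (fun τ => toEuclideanCLM (𝕜 := ℝ) (Φ τ t)) =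
      fun τ => toEuclideanCLM (𝕜 := ℝ) (Φ t τ) :=
    funext fun τ => Ring.inverse_unit (u τ)
  have hforward : HasDerivAt (fun τ => toEuclideanCLM (𝕜 := ℝ) (Φ τ t))
      (toEuclideanCLM (𝕜 := ℝ) (-(A σ * Φ σ t))) σ :=
    hasDerivAt_toEuclideanCLM fun z => by simpa [Matrix.neg_mulVec] using hΦ.hasDerivAt t σ z
  have := (hasFDerivAt_ringInverse (u σ)).comp_hasDerivAt σ hforward
  rw [hinv] at this
  refine this.congr_deriv ?_
  change -(toEuclideanCLM (𝕜 := ℝ) (Φ t σ) * toEuclideanCLM (𝕜 := ℝ) (-(A σ * Φ σ t)) *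
    toEuclideanCLM (𝕜 := ℝ) (Φ t σ)) = _
  rw [← map_mul, ← map_mul, ← map_neg]
  simp [mul_assoc, hΦ.cocycle hA, hΦ.apply_self]

theorem hasDerivAt_toLp_mulVec (hΦ : IsStateTransition A Φ) (hA : ∀ t a b, |A t a b| ≤ C)
    {x f : ℝ → ι → ℝ} {t σ : ℝ} (hx : HasDerivAt x (-(A σ *ᵥ x σ) + f σ) σ) :
    HasDerivAt (fun τ => WithLp.toLp 2 (Φ t τ *ᵥ x τ)) (WithLp.toLp 2 (Φ t σ *ᵥ f σ)) σ := by
  have hx' : HasDerivAt (fun τ => WithLp.toLp 2 (x τ))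
      (WithLp.toLp 2 (-(A σ *ᵥ x σ) + f σ) : EuclideanSpace ℝ ι) σ :=
    (EuclideanSpace.equiv ι ℝ).symm.hasFDerivAt.comp_hasDerivAt σ hx
  refine ((hΦ.hasDerivAt_toEuclideanCLM_right hA t σ).clm_apply hx').congr_deriv ?_
  simp

theorem expDecay_of_forced (hΦ : IsStateTransition A Φ) (hA : ∀ t a b, |A t a b| ≤ C)
    {k b c c' : ℝ} (hk : 0 ≤ k)
    (hdecay : ∀ s t : ℝ, 0 ≤ s → s ≤ t → ∀ z,
      euclNorm (Φ t s *ᵥ z) ≤ k * exp (-b * (t - s)) * euclNorm z)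
    {x f : ℝ → ι → ℝ} (hx : ∀ t, 0 ≤ t → HasDerivAt x (-(A t *ᵥ x t) + f t) t)
    (hf : ExpDecay c' f) (hcb : c ≤ b) (hcc' : c < c') : ExpDecay c x := by
  obtain ⟨Mf, hMf, hf⟩ := hf
  simp only [euclNorm_eq_norm_toLp] at hdecay hf ⊢
  have hβ : 0 < c' - c := sub_pos.2 hcc'
  refine ⟨k * ‖WithLp.toLp 2 (x 0)‖ + k * Mf / (c' - c) + 1, by positivity, fun t ht => ?_⟩
  rw [euclNorm_eq_norm_toLp]
  have hfree : ‖WithLp.toLp 2 (Φ t 0 *ᵥ x 0)‖ ≤ k * ‖WithLp.toLp 2 (x 0)‖ * exp (-c * t) := by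
    refine (hdecay 0 t le_rfl ht _).trans ?_
    rw [mul_right_comm]
    exact mul_le_mul_of_nonneg_left (exp_le_exp.2 (by nlinarith)) (by positivity)
  have hforced : ‖WithLp.toLp 2 (Φ t t *ᵥ x t) - WithLp.toLp 2 (Φ t 0 *ᵥ x 0)‖ ≤
      k * Mf * exp (-c * t) / (c' - c) := by
    refine norm_sub_le_of_norm_deriv_le_exp hβ ht
      (fun σ hσ => hΦ.hasDerivAt_toLp_mulVec hA (hx σ hσ.1)) fun σ ⟨hσ, hσt⟩ => ?_
    have hexp : exp (-b * (t - σ)) * exp (-c' * σ) ≤ exp (-c * t) * exp (-(c' - c) * σ) := by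
      rw [← exp_add, ← exp_add, exp_le_exp]
      nlinarith [mul_le_mul_of_nonneg_right hcb (sub_nonneg.2 hσt)]
    calc ‖WithLp.toLp 2 (Φ t σ *ᵥ f σ)‖
        ≤ k * exp (-b * (t - σ)) * (Mf * exp (-c' * σ)) := by
          grw [hdecay σ t hσ hσt, hf σ hσ]
      _ = k * Mf * (exp (-b * (t - σ)) * exp (-c' * σ)) := by ring
      _ ≤ k * Mf * (exp (-c * t) * exp (-(c' - c) * σ)) := by grw [hexp]
      _ = _ := by ring
  calc ‖WithLp.toLp 2 (x t)‖
      = ‖WithLp.toLp 2 (Φ t 0 *ᵥ x 0) +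
          (WithLp.toLp 2 (Φ t t *ᵥ x t) - WithLp.toLp 2 (Φ t 0 *ᵥ x 0))‖ := by
        simp [hΦ.apply_self]
    _ ≤ k * ‖WithLp.toLp 2 (x 0)‖ * exp (-c * t) + k * Mf * exp (-c * t) / (c' - c) :=
        (norm_add_le _ _).trans (add_le_add hfree hforced)
    _ ≤ (k * ‖WithLp.toLp 2 (x 0)‖ + k * Mf / (c' - c) + 1) * exp (-c * t) := by
        have := exp_pos (-c * t)
        rw [add_mul, add_mul, one_mul, mul_div_right_comm]
        linarith

end IsStateTransition

theorem exists_rate_between {n i : ℕ} {c : ℕ → ℝ} (hc : StrictAntiOn c (Icc 2 n))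
    (hi : i ∈ Icc 2 n) : ∃ r, c i < r ∧ ∀ k ∈ Finset.Ico 2 i, r ≤ c k := by
  obtain ⟨hi2, hin⟩ := hi
  rcases hi2.eq_or_lt with rfl | hi2
  · exact ⟨c 2 + 1, by linarith, by simp⟩
  refine ⟨c (i - 1), hc ⟨by omega, by omega⟩ ⟨by omega, hin⟩ (by omega), fun k hk => ?_⟩
  obtain ⟨hk2, hki⟩ := Finset.mem_Ico.1 hk
  exact hc.antitoneOn ⟨hk2, by omega⟩ ⟨by omega, by omega⟩ (by omega)

theorem expDecay_cascade {ι : Type*} [Fintype ι] [DecidableEq ι] {n : ℕ} {N : ℕ → Finset ℕ}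
    {A : ℕ → ℝ → Matrix ι ι ℝ} {Φ : ℕ → ℝ → ℝ → Matrix ι ι ℝ} {kΦ b c : ℕ → ℝ}
    {x : ℕ → ℕ → ℝ → ι → ℝ} {B : ℕ → ℕ → ℕ → ℕ → ℝ → Matrix ι ι ℝ} {MB : ℝ}
    (hΦ : ∀ i, 2 ≤ i → i ≤ n → IsStateTransition (A i) (Φ i))
    (hA : ∀ i, 2 ≤ i → i ≤ n → ∃ C, ∀ t a a', |A i t a a'| ≤ C)
    (hkΦ : ∀ i, 0 ≤ kΦ i)
    (hdecay : ∀ i, 2 ≤ i → i ≤ n → ∀ s t : ℝ, 0 ≤ s → s ≤ t → ∀ z,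
      euclNorm (Φ i t s *ᵥ z) ≤ kΦ i * exp (-(b i) * (t - s)) * euclNorm z)
    (hB : ∀ i j k m t, 0 ≤ t → ∀ z, euclNorm (B i j k m t *ᵥ z) ≤ MB * euclNorm z)
    (hode : ∀ i, 2 ≤ i → i ≤ n → ∀ j ∈ N i, ∀ t : ℝ, 0 ≤ t →
      HasDerivAt (x i j)
        (-(A i t *ᵥ x i j t) + ∑ k ∈ Finset.Ico 2 i, ∑ m ∈ N k, B i j k m t *ᵥ x k m t) t)
    (hcb : ∀ i, 2 ≤ i → i ≤ n → c i ≤ b i) (hc : StrictAntiOn c (Icc 2 n)) :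
    ∀ i, 2 ≤ i → i ≤ n → ∀ j ∈ N i, ExpDecay (c i) (x i j) := by
  intro i
  induction i using Nat.strong_induction_on with
  | _ i IH =>
    intro hi2 hin j hj
    obtain ⟨r, hcr, hrc⟩ := exists_rate_between hc ⟨hi2, hin⟩
    obtain ⟨C, hC⟩ := hA i hi2 hin
    refine (hΦ i hi2 hin).expDecay_of_forced hC (hkΦ i) (hdecay i hi2 hin)
      (f := fun t => ∑ k ∈ Finset.Ico 2 i, ∑ m ∈ N k, B i j k m t *ᵥ x k m t)
      (hode i hi2 hin j hj) ?_ (hcb i hi2 hin) hcr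
    refine ExpDecay.sum fun k hk => ExpDecay.sum fun m hm => ?_
    obtain ⟨hk2, hki⟩ := Finset.mem_Ico.1 hk
    exact ((IH k hki hk2 (by omega) m hm).mulVec (hB i j k m)).mono (hrc k hk)

theorem abs_one_apply_le {n : Type*} [DecidableEq n] (a b : n) :
    |(1 : Matrix n n ℝ) a b| ≤ 1 := by
  rw [Matrix.one_apply]; split_ifs <;> simp

theorem abs_proj_apply_le {y : Fin 3 → ℝ} (hy : y ⬝ᵥ y = 1) (a b : Fin 3) :
    |proj y a b| ≤ 2 := by
  have hy1 : ∀ c, |y c| ≤ 1 := fun c => by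
    rw [← sq_le_one_iff_abs_le_one, sq, ← hy]
    exact Finset.single_le_sum (f := fun c => y c * y c) (fun c _ => mul_self_nonneg (y c))
      (Finset.mem_univ c)
  calc |proj y a b| = |(1 : Matrix (Fin 3) (Fin 3) ℝ) a b - y a * y b| := by
        simp [proj, Matrix.vecMulVec_apply]
    _ ≤ |(1 : Matrix (Fin 3) (Fin 3) ℝ) a b| + |y a| * |y b| := by
        rw [← abs_mul]; exact abs_sub _ _
    _ ≤ 1 + 1 * 1 := by
        gcongr
        exacts [abs_one_apply_le a b, hy1 a, hy1 b]
    _ = 2 := by norm_num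

theorem abs_fromBlocks_apply_le {l m : Type*} {P Q R S : Matrix _ _ ℝ} {C : ℝ}
    (hP : ∀ a b, |P a b| ≤ C) (hQ : ∀ a b, |Q a b| ≤ C) (hR : ∀ a b, |R a b| ≤ C)
    (hS : ∀ a b, |S a b| ≤ C) : ∀ a b : l ⊕ m, |fromBlocks P Q R S a b| ≤ C := by
  rintro (a | a) (b | b)
  exacts [hP a b, hQ a b, hR a b, hS a b]

theorem abs_fromBlocks_proj_apply_le {α : Type*} {s : Finset α} {y : α → Fin 3 → ℝ}
    (hy : ∀ l ∈ s, y l ⬝ᵥ y l = 1) (kp kd : ℝ) (a b : Fin 3 ⊕ Fin 3) :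
    |fromBlocks 0 (-1) (kp • ∑ l ∈ s, proj (y l)) ((kd * (s.card : ℝ)) • 1) a b| ≤
      1 + |kp| * (2 * s.card) + |kd * s.card| := by
  have h1 : (0 : ℝ) ≤ |kp| * (2 * s.card) := by positivity
  have h2 : 0 ≤ |kd * s.card| := abs_nonneg _
  refine abs_fromBlocks_apply_le (fun a b => ?_) (fun a b => ?_) (fun a b => ?_)
    (fun a b => ?_) a b
  · simp only [Matrix.zero_apply, abs_zero]; linarith
  · rw [Matrix.neg_apply, abs_neg]; linarith [abs_one_apply_le a b]
  · rw [Matrix.smul_apply, Matrix.sum_apply, smul_eq_mul, abs_mul]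
    have : |∑ l ∈ s, proj (y l) a b| ≤ 2 * s.card := by
      refine (Finset.abs_sum_le_sum_abs _ _).trans ?_
      rw [mul_comm, ← nsmul_eq_mul]
      exact Finset.sum_le_card_nsmul _ _ _ fun l hl => abs_proj_apply_le (hy l hl) a b
    nlinarith [abs_nonneg kp]
  · rw [Matrix.smul_apply, smul_eq_mul, abs_mul]
    nlinarith [abs_one_apply_le a b, abs_nonneg (kd * s.card)]

theorem halvedMinRate_pos {b c : ℕ → ℝ} (hb : ∀ i, 0 < b i) (hc2 : c 2 = b 2)
    (hrec : ∀ i, 3 ≤ i → c i = min (c (i - 1)) (b i) / 2) : ∀ i, 2 ≤ i → 0 < c i := by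
  intro i hi
  induction i, hi using Nat.le_induction with
  | base => rw [hc2]; exact hb 2
  | succ i hi ih =>
    rw [hrec (i + 1) (by omega), Nat.add_sub_cancel]
    exact half_pos (lt_min ih (hb _))

theorem halvedMinRate_le {b c : ℕ → ℝ} (hb : ∀ i, 0 < b i) (hc2 : c 2 = b 2)
    (hrec : ∀ i, 3 ≤ i → c i = min (c (i - 1)) (b i) / 2) (i : ℕ) (hi : 2 ≤ i) : c i ≤ b i := by
  rcases hi.eq_or_lt with rfl | hi
  · exact hc2.le
  rw [hrec i hi]
  linarith [min_le_right (c (i - 1)) (b i), hb i]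

theorem halvedMinRate_strictAntiOn {b c : ℕ → ℝ} (hb : ∀ i, 0 < b i) (hc2 : c 2 = b 2)
    (hrec : ∀ i, 3 ≤ i → c i = min (c (i - 1)) (b i) / 2) : StrictAntiOn c (Ici 2) :=
  strictAntiOn_Ici_of_lt_pred fun i hi => by
    rw [hrec i hi, Order.pred_eq_sub_one]
    linarith [min_le_left (c (i - 1)) (b i), halvedMinRate_pos hb hc2 hrec (i - 1) (by omega)]

theorem stmt9_general
    (n : ℕ) (hn : 2 ≤ n) (N : ℕ → Finset ℕ)
    (kp kd : ℕ → ℝ) (g : ℕ → ℕ → ℝ → (Fin 3 → ℝ))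
    (hg : ∀ i : ℕ, 2 ≤ i → i ≤ n → ∀ l ∈ N i, ∀ t : ℝ, g i l t ⬝ᵥ g i l t = 1)
    (A : ℕ → ℝ → Matrix (Fin 3 ⊕ Fin 3) (Fin 3 ⊕ Fin 3) ℝ)
    (hA : ∀ i : ℕ, ∀ t : ℝ, A i t =
      Matrix.fromBlocks 0 (-1)
        ((kp i) • ∑ l ∈ N i, proj (g i l t)) ((kd i * ((N i).card : ℝ)) • 1))
    -- transition matrices of the unforced systems and their exponential decay rates b_i
    (Φ : ℕ → ℝ → ℝ → Matrix (Fin 3 ⊕ Fin 3) (Fin 3 ⊕ Fin 3) ℝ)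
    (hΦ0 : ∀ i s, Φ i s s = 1)
    (hΦ : ∀ i : ℕ, ∀ s t : ℝ, ∀ z : Fin 3 ⊕ Fin 3 → ℝ,
      HasDerivAt (fun τ => (Φ i τ s).mulVec z) (-((A i t) * Φ i t s).mulVec z) t)
    (kΦ b : ℕ → ℝ) (hkΦ : ∀ i, 0 < kΦ i) (hb : ∀ i, 0 < b i)
    (hΦdecay : ∀ i : ℕ, 2 ≤ i → i ≤ n → ∀ s t : ℝ, 0 ≤ s → s ≤ t →
      ∀ z : Fin 3 ⊕ Fin 3 → ℝ,
        euclNorm ((Φ i t s).mulVec z) ≤ kΦ i * Real.exp (-(b i) * (t - s)) * euclNorm z)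
    -- cascaded error dynamics with bounded interconnection terms B_km
    (xt : ℕ → ℕ → ℝ → (Fin 3 ⊕ Fin 3 → ℝ))
    (B : ℕ → ℕ → ℕ → ℕ → ℝ → Matrix (Fin 3 ⊕ Fin 3) (Fin 3 ⊕ Fin 3) ℝ)
    (hB : ∃ MB : ℝ, ∀ i j k m : ℕ, ∀ t : ℝ, 0 ≤ t → ∀ z : Fin 3 ⊕ Fin 3 → ℝ,
      euclNorm ((B i j k m t).mulVec z) ≤ MB * euclNorm z)
    (hode : ∀ i : ℕ, 2 ≤ i → i ≤ n → ∀ j ∈ N i, ∀ t : ℝ, 0 ≤ t →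
      HasDerivAt (xt i j)
        (-(A i t).mulVec (xt i j t) +
          ∑ k ∈ Finset.Ico 2 i, ∑ m ∈ N k, (B i j k m t).mulVec (xt k m t)) t) :
    -- conclusion: rates c₂ = b₂ and c_i = min{c_{i−1}, b_i}/2 for i ≥ 3
    (∀ c : ℕ → ℝ, c 2 = b 2 → (∀ i : ℕ, 3 ≤ i → c i = min (c (i - 1)) (b i) / 2) →
      ∀ i : ℕ, 2 ≤ i → i ≤ n → ∀ j ∈ N i, ∃ K : ℝ, 0 < K ∧
        ∀ t : ℝ, 0 ≤ t → euclNorm (xt i j t) ≤ K * Real.exp (-(c i) * t)) ∧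
    -- particular case: if b_i = b for all i, agent i ≥ 3 decays with rate b/2^{i−2}
    (∀ bc : ℝ, (∀ i : ℕ, 2 ≤ i → i ≤ n → b i = bc) →
      ∀ i : ℕ, 3 ≤ i → i ≤ n → ∀ j ∈ N i, ∃ K : ℝ, 0 < K ∧
        ∀ t : ℝ, 0 ≤ t →
          euclNorm (xt i j t) ≤ K * Real.exp (-(bc / 2 ^ (i - 2)) * t)) := by
  obtain ⟨MB, hMB⟩ := hB
  have hAbound : ∀ i, 2 ≤ i → i ≤ n → ∃ C, ∀ t a a', |A i t a a'| ≤ C := fun i hi hin =>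
    ⟨_, fun t => hA i t ▸ abs_fromBlocks_proj_apply_le (fun l hl => hg i hi hin l hl t) _ _⟩
  have cascade := fun c : ℕ → ℝ => expDecay_cascade (c := c) (fun i _ _ => ⟨hΦ0 i, hΦ i⟩)
    hAbound (fun i => (hkΦ i).le) hΦdecay hMB hode
  refine ⟨fun c hc2 hrec => cascade c (fun i hi _ => halvedMinRate_le hb hc2 hrec i hi)
    ((halvedMinRate_strictAntiOn hb hc2 hrec).mono Icc_subset_Ici_self), fun bc hbc i hi hin => ?_⟩
  have hbc0 : 0 < bc := hbc 2 le_rfl hn ▸ hb 2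
  refine cascade (fun i => bc / 2 ^ (i - 2)) (fun i' hi' hin' => ?_)
    (fun i' ⟨hi', _⟩ i'' _ hi'' => ?_) i (by omega) hin
  · rw [hbc i' hi' hin']
    exact div_le_self hbc0.le (one_le_pow₀ one_le_two)
  · exact div_lt_div_of_pos_left hbc0 (by positivity)
      (pow_lt_pow_right₀ one_lt_two (by omega))

/-- convergence rates of the cascaded leader-follower error system
(Proposition 1).  Agents are indexed `1,…,n`; each error satisfies
`ẋ̃_ij = −A_i(g_i(t)) x̃_ij + Σ_{2≤k≤i−1, m∈N_k} B_km(t) x̃_km` with bounded `B_km`, and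
the transition matrix of `ẋ̃ = −A_i(g_i(t)) x̃` decays with rate greater than `b_i`.
Then agent 2 decays with rate greater than `c₂ = b₂` and agent `i ≥ 3` with rate greater
than `c_i = (1/2)·min{c_{i−1}, b_i}`; if `b_i = b` for all `i`, then agent `i ≥ 3` decays
with rate greater than `b/2^{i−2}`. -/
theorem stmt9
    (n : ℕ) (hn : 2 ≤ n) (N : ℕ → Finset ℕ)
    (hN1 : N 1 = ∅) (hN2 : N 2 = {1})
    (hN : ∀ i : ℕ, 3 ≤ i → i ≤ n → (N i).Nonempty ∧ N i ⊆ Finset.Ico 1 i)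
    (kp kd : ℕ → ℝ) (g : ℕ → ℕ → ℝ → (Fin 3 → ℝ))
    (hg : ∀ i : ℕ, 2 ≤ i → i ≤ n → ∀ l ∈ N i, ∀ t : ℝ, g i l t ⬝ᵥ g i l t = 1)
    (A : ℕ → ℝ → Matrix (Fin 3 ⊕ Fin 3) (Fin 3 ⊕ Fin 3) ℝ)
    (hA : ∀ i : ℕ, ∀ t : ℝ, A i t =
      Matrix.fromBlocks 0 (-1)
        ((kp i) • ∑ l ∈ N i, proj (g i l t)) ((kd i * ((N i).card : ℝ)) • 1))
    -- transition matrices of the unforced systems and their exponential decay rates b_i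
    (Φ : ℕ → ℝ → ℝ → Matrix (Fin 3 ⊕ Fin 3) (Fin 3 ⊕ Fin 3) ℝ)
    (hΦ0 : ∀ i s, Φ i s s = 1)
    (hΦ : ∀ i : ℕ, ∀ s t : ℝ, ∀ z : Fin 3 ⊕ Fin 3 → ℝ,
      HasDerivAt (fun τ => (Φ i τ s).mulVec z) (-((A i t) * Φ i t s).mulVec z) t)
    (kΦ b : ℕ → ℝ) (hkΦ : ∀ i, 0 < kΦ i) (hb : ∀ i, 0 < b i)
    (hΦdecay : ∀ i : ℕ, 2 ≤ i → i ≤ n → ∀ s t : ℝ, 0 ≤ s → s ≤ t →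
      ∀ z : Fin 3 ⊕ Fin 3 → ℝ,
        euclNorm ((Φ i t s).mulVec z) ≤ kΦ i * Real.exp (-(b i) * (t - s)) * euclNorm z)
    -- cascaded error dynamics with bounded interconnection terms B_km
    (xt : ℕ → ℕ → ℝ → (Fin 3 ⊕ Fin 3 → ℝ))
    (B : ℕ → ℕ → ℕ → ℕ → ℝ → Matrix (Fin 3 ⊕ Fin 3) (Fin 3 ⊕ Fin 3) ℝ)
    (hB : ∃ MB : ℝ, ∀ i j k m : ℕ, ∀ t : ℝ, 0 ≤ t → ∀ z : Fin 3 ⊕ Fin 3 → ℝ,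
      euclNorm ((B i j k m t).mulVec z) ≤ MB * euclNorm z)
    (hode : ∀ i : ℕ, 2 ≤ i → i ≤ n → ∀ j ∈ N i, ∀ t : ℝ, 0 ≤ t →
      HasDerivAt (xt i j)
        (-(A i t).mulVec (xt i j t) +
          ∑ k ∈ Finset.Ico 2 i, ∑ m ∈ N k, (B i j k m t).mulVec (xt k m t)) t) :
    -- conclusion: rates c₂ = b₂ and c_i = min{c_{i−1}, b_i}/2 for i ≥ 3
    (∀ c : ℕ → ℝ, c 2 = b 2 → (∀ i : ℕ, 3 ≤ i → c i = min (c (i - 1)) (b i) / 2) →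
      ∀ i : ℕ, 2 ≤ i → i ≤ n → ∀ j ∈ N i, ∃ K : ℝ, 0 < K ∧
        ∀ t : ℝ, 0 ≤ t → euclNorm (xt i j t) ≤ K * Real.exp (-(c i) * t)) ∧
    -- particular case: if b_i = b for all i, agent i ≥ 3 decays with rate b/2^{i−2}
    (∀ bc : ℝ, (∀ i : ℕ, 2 ≤ i → i ≤ n → b i = bc) →
      ∀ i : ℕ, 3 ≤ i → i ≤ n → ∀ j ∈ N i, ∃ K : ℝ, 0 < K ∧
        ∀ t : ℝ, 0 ≤ t →
          euclNorm (xt i j t) ≤ K * Real.exp (-(bc / 2 ^ (i - 2)) * t)) :=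
  stmt9_general n hn N kp kd g hg A hA Φ hΦ0 hΦ kΦ b hkΦ hb hΦdecay xt B hB hode
end
end

section
/- Let y ∈ ℝ³ be a unit vector and c₁, c₂, c₃ real constants with c₁ > 0, c₃ > 0 and c₁ c₃ > c₂². Then the 6×6 matrix M = [[c₃ I₃, c₂ [y]_×],[−c₂ [y]_×, c₁ I₃]] satisfies M ≥ λ_M I₆ with λ_M = (c₁ c₃ − c₂²)/(c₁ + c₃) > 0; in particular M is positive definite. -/
/-!
Write `S = [y]_×` and `λ = λ_M`. Since `Sᵀ = -S`, the shifted matrix `M - λ I` is the block matrix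
`[[(c₃ - λ) I, c₂ S], [c₂ Sᵀ, (c₁ - λ) I]]`, and its Schur complement is
`(c₁ - λ - c₂² / (c₃ - λ)) I + (c₂² / (c₃ - λ)) (I - SᵀS)`. For a unit vector `I - SᵀS = y yᵀ`, and
the choice of `λ` is exactly what makes `(c₃ - λ)(c₁ - λ) = c₂² + λ² ≥ c₂²`, so both terms are
positive semidefinite.
-/

open Matrix

noncomputable section

/-- The skew-symmetric matrix `[y]_×` associated with `y ∈ ℝ³`, so that `[y]_× v = y × v`. -/
def skew (y : Fin 3 → ℝ) : Matrix (Fin 3) (Fin 3) ℝ :=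
  !![0, -y 2, y 1; y 2, 0, -y 0; -y 1, y 0, 0]

theorem skew_transpose (y : Fin 3 → ℝ) : (skew y)ᵀ = -skew y := by
  ext i j
  fin_cases i <;> fin_cases j <;> simp [skew]

theorem skew_transpose_mul_self (y : Fin 3 → ℝ) :
    (skew y)ᵀ * skew y = (y ⬝ᵥ y) • 1 - vecMulVec y y := by
  ext i j
  fin_cases i <;> fin_cases j <;>
    simp [skew, vecMulVec, dotProduct, Fin.sum_univ_three, Matrix.mul_apply, one_apply] <;> ring

theorem posSemidef_fromBlocks_smul_one {m n : Type*} [Fintype m] [Fintype n]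
    [DecidableEq m] [DecidableEq n] {a b c : ℝ} (ha : 0 < a) (hc : c ^ 2 ≤ a * b)
    {S : Matrix m n ℝ} (hS : (1 - Sᵀ * S).PosSemidef) :
    (fromBlocks (a • 1) (c • S) (c • Sᵀ) (b • 1)).PosSemidef := by
  have hA : (a • 1 : Matrix m m ℝ).PosDef := PosDef.one.smul ha
  let : Invertible (a • 1 : Matrix m m ℝ) := ⟨a⁻¹ • 1, by simp [ha.ne'], by simp [ha.ne']⟩
  have hinv : (a • 1 : Matrix m m ℝ)⁻¹ = a⁻¹ • 1 := by
    rw [inv_eq_left_inv]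
    simp [ha.ne']
  have hschur : (b • 1 : Matrix n n ℝ) - (c • S)ᴴ * (a • 1 : Matrix m m ℝ)⁻¹ * (c • S) =
      (b - c ^ 2 / a) • 1 + (c ^ 2 / a) • (1 - Sᵀ * S) := by
    rw [hinv, conjTranspose_eq_transpose_of_trivial]
    simp only [transpose_smul, Matrix.mul_smul, Matrix.smul_mul, Matrix.mul_one, smul_sub,
      sub_smul, smul_smul]
    module
  have hb : 0 ≤ b - c ^ 2 / a := by
    rw [sub_nonneg, div_le_iff₀ ha]
    linarith
  have h := (PosDef.fromBlocks₁₁ (c • S) (b • 1 : Matrix n n ℝ) hA).2 <| by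
    rw [hschur]
    exact (PosSemidef.one.smul hb).add (hS.smul (by positivity))
  rwa [conjTranspose_eq_transpose_of_trivial, transpose_smul] at h

/-- for a unit vector `y ∈ ℝ³` and constants `c₁, c₃ > 0` with `c₁c₃ > c₂²`,
the matrix `M = [[c₃I, c₂[y]_×],[−c₂[y]_×, c₁I]]` satisfies `M ≥ λ_M I₆` with
`λ_M = (c₁c₃ − c₂²)/(c₁ + c₃) > 0`; in particular `M` is positive definite. -/
theorem stmt11
    (y : Fin 3 → ℝ) (hy : y ⬝ᵥ y = 1)
    (c1 c2 c3 : ℝ) (hc1 : 0 < c1) (hc3 : 0 < c3) (hdet : c1 * c3 > c2 ^ 2) :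
    0 < (c1 * c3 - c2 ^ 2) / (c1 + c3) ∧
    ((Matrix.fromBlocks (c3 • 1) (c2 • skew y) ((-c2) • skew y) (c1 • 1)
        : Matrix (Fin 3 ⊕ Fin 3) (Fin 3 ⊕ Fin 3) ℝ) -
      ((c1 * c3 - c2 ^ 2) / (c1 + c3)) • 1).PosSemidef ∧
    (Matrix.fromBlocks (c3 • 1) (c2 • skew y) ((-c2) • skew y) (c1 • 1)
        : Matrix (Fin 3 ⊕ Fin 3) (Fin 3 ⊕ Fin 3) ℝ).PosDef := by
  set M : Matrix (Fin 3 ⊕ Fin 3) (Fin 3 ⊕ Fin 3) ℝ :=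
    fromBlocks (c3 • 1) (c2 • skew y) ((-c2) • skew y) (c1 • 1)
  set lam := (c1 * c3 - c2 ^ 2) / (c1 + c3) with hlam
  have hlam_pos : 0 < lam := div_pos (by linarith) (by positivity)
  have hgap : (c3 - lam) * (c1 - lam) = c2 ^ 2 + lam ^ 2 := by
    rw [hlam]
    field_simp
    ring
  have hc3_lam : 0 < c3 - lam := by
    rw [hlam, sub_pos, div_lt_iff₀ (by positivity)]
    nlinarith
  have hshift : M - lam • 1 =
      fromBlocks ((c3 - lam) • 1) (c2 • skew y) (c2 • (skew y)ᵀ) ((c1 - lam) • 1) := by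
    rw [← fromBlocks_one, fromBlocks_smul, sub_eq_add_neg, fromBlocks_neg, fromBlocks_add,
      skew_transpose]
    simp [sub_eq_add_neg, add_smul]
  have hpsd : (M - lam • 1).PosSemidef := by
    rw [hshift]
    refine posSemidef_fromBlocks_smul_one hc3_lam
      (hgap ▸ le_add_of_nonneg_right (sq_nonneg lam)) ?_
    rw [skew_transpose_mul_self, hy, one_smul, sub_sub_cancel]
    exact posSemidef_vecMulVec_self_star y
  refine ⟨hlam_pos, hpsd, ?_⟩
  simpa using PosDef.posSemidef_add hpsd (PosDef.one.smul hlam_pos)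
end
end

section
/- Let y₁,…,y_m ∈ ℝ³ be unit vectors and let c₁, c₂, c₃, c₄, c₅ be positive constants with c₁ c₃ > c₂². Define the 6×6 matrices A = [[0, −I₃],[c₄ Σ_{i=1}^m π_{y_i}, c₅ I₃]] and Q = [[c₃ Σ_{i=1}^m π_{y_i}, c₂ Σ_{i=1}^m π_{y_i}],[c₂ Σ_{i=1}^m π_{y_i}, m c₁ I₃]]. Then there exists a constant c > 0, depending only on c₁,…,c₅ and m (one may take c = (l_A/l_Q)·m with l_Q = λ_min([[c₃, c₂],[c₂, c₁]]) and l_A = λ_max([[c₄², c₅c₄],[c₅c₄, c₅²+1]])), such that c Q − Aᵀ A ≥ 0. -/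
open Matrix

noncomputable section

/-- Smallest eigenvalue of the symmetric 2×2 matrix `[[a, b],[b, d]]`. -/
def eigMin2 (a b d : ℝ) : ℝ := ((a + d) - Real.sqrt ((a - d) ^ 2 + 4 * b ^ 2)) / 2

/-- Largest eigenvalue of the symmetric 2×2 matrix `[[a, b],[b, d]]`. -/
def eigMax2 (a b d : ℝ) : ℝ := ((a + d) + Real.sqrt ((a - d) ^ 2 + 4 * b ^ 2)) / 2

/-!
Write `P = ∑ π_{y_i}` and evaluate both quadratic forms at `(u, v)`. Since each `π_i` is a
symmetric projection, `⟨u, P v⟩ = ∑ ⟨π_i u, π_i v⟩` and `|π_i v| ≤ |v|`; hence the form of `Q`,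
`c₃⟨u, Pu⟩ + 2c₂⟨u, Pv⟩ + m c₁|v|²`, splits into `m` copies of the 2×2 form `[[c₃, c₂], [c₂, c₁]]`
and is at least `l_Q (⟨u, Pu⟩ + m|v|²)`. On the other side `|A(u, v)|² = |v|² + |c₄Pu + c₅v|²`
is at most `l_A (|Pu|² + |v|²)`, and Cauchy–Schwarz over the `m` summands of `Pu` gives
`|Pu|² ≤ m⟨u, Pu⟩`; as `m ≥ 1`, this is at most `l_A m (⟨u, Pu⟩ + m|v|²)`.
-/

open Finset

section DotProduct

variable {n : Type*} [Fintype n]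

lemma dotProduct_self_nonneg (v : n → ℝ) : 0 ≤ v ⬝ᵥ v := by
  simpa using dotProduct_star_self_nonneg v

lemma quadratic_nonneg {α β γ : ℝ} (hα : 0 ≤ α) (hγ : 0 ≤ γ) (h : β ^ 2 ≤ α * γ)
    (s t : ℝ) : 0 ≤ α * s ^ 2 + 2 * β * s * t + γ * t ^ 2 := by
  rcases hα.eq_or_lt with rfl | hα
  · have hβ : β = 0 := by nlinarith [sq_nonneg β]
    subst hβ
    nlinarith [sq_nonneg t]
  · refine (mul_nonneg_iff_of_pos_left hα).mp ?_
    have key : α * (α * s ^ 2 + 2 * β * s * t + γ * t ^ 2)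
        = (α * s + β * t) ^ 2 + (α * γ - β ^ 2) * t ^ 2 := by ring
    rw [key]
    nlinarith [sq_nonneg (α * s + β * t), sq_nonneg t]

lemma quadratic_dotProduct_nonneg {α β γ : ℝ} (hα : 0 ≤ α) (hγ : 0 ≤ γ)
    (h : β ^ 2 ≤ α * γ) (s t : n → ℝ) : 0 ≤ α * (s ⬝ᵥ s) + 2 * β * (s ⬝ᵥ t) + γ * (t ⬝ᵥ t) := by
  have expand : α * (s ⬝ᵥ s) + 2 * β * (s ⬝ᵥ t) + γ * (t ⬝ᵥ t)
      = ∑ j, (α * s j ^ 2 + 2 * β * s j * t j + γ * t j ^ 2) := by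
    simp only [dotProduct, sum_add_distrib, mul_sum, sq, mul_assoc]
  rw [expand]
  exact sum_nonneg fun j _ => quadratic_nonneg hα hγ h (s j) (t j)

lemma sum_dotProduct_sum_le {ι : Type*} (s : Finset ι) (a : ι → n → ℝ) :
    (∑ i ∈ s, a i) ⬝ᵥ (∑ i ∈ s, a i) ≤ #s * ∑ i ∈ s, a i ⬝ᵥ a i := calc
  (∑ i ∈ s, a i) ⬝ᵥ (∑ i ∈ s, a i) = ∑ j, (∑ i ∈ s, a i j) ^ 2 := by
    simp [dotProduct, sq, Finset.sum_apply]
  _ ≤ ∑ j, #s * ∑ i ∈ s, a i j ^ 2 := sum_le_sum fun j _ => sq_sum_le_card_mul_sum_sq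
  _ = #s * ∑ i ∈ s, a i ⬝ᵥ a i := by
    rw [← mul_sum, sum_comm]; simp [dotProduct, sq]

lemma dotProduct_mulVec_eq_of_mul_self {M : Matrix n n ℝ} (hT : Mᵀ = M) (hM : M * M = M)
    (u v : n → ℝ) : u ⬝ᵥ (M *ᵥ v) = (M *ᵥ u) ⬝ᵥ (M *ᵥ v) := by
  calc u ⬝ᵥ (M *ᵥ v) = u ⬝ᵥ (Mᵀ *ᵥ (M *ᵥ v)) := by rw [mulVec_mulVec, hT, hM]
    _ = (M *ᵥ u) ⬝ᵥ (M *ᵥ v) := by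
      rw [mulVec_transpose, dotProduct_comm, ← dotProduct_mulVec, dotProduct_comm]

lemma dotProduct_mulVec_comm {M : Matrix n n ℝ} (hT : Mᵀ = M) (u v : n → ℝ) :
    u ⬝ᵥ (M *ᵥ v) = v ⬝ᵥ (M *ᵥ u) := by
  rw [dotProduct_mulVec, ← mulVec_transpose, hT, dotProduct_comm]

lemma dotProduct_transpose_mul_mulVec {m : Type*} [Fintype m] (A : Matrix m n ℝ)
    (x : n → ℝ) :
    x ⬝ᵥ ((Aᵀ * A) *ᵥ x) = (A *ᵥ x) ⬝ᵥ (A *ᵥ x) := by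
  rw [← mulVec_mulVec, mulVec_transpose, dotProduct_comm, ← dotProduct_mulVec, dotProduct_comm]

lemma sumElim_dotProduct_fromBlocks_mulVec {m : Type*} [Fintype m] (A : Matrix m m ℝ)
    (B : Matrix m n ℝ) (C : Matrix n m ℝ) (D : Matrix n n ℝ) (u : m → ℝ) (v : n → ℝ) :
    Sum.elim u v ⬝ᵥ (fromBlocks A B C D *ᵥ Sum.elim u v)
      = u ⬝ᵥ (A *ᵥ u) + u ⬝ᵥ (B *ᵥ v) + (v ⬝ᵥ (C *ᵥ u) + v ⬝ᵥ (D *ᵥ v)) := by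
  simp [fromBlocks_mulVec, sumElim_dotProduct_sumElim, dotProduct_add]

end DotProduct

section Eigenvalues

variable {a b d : ℝ}

lemma sqrt_discrim_sq (a b d : ℝ) :
    √((a - d) ^ 2 + 4 * b ^ 2) ^ 2 = (a - d) ^ 2 + 4 * b ^ 2 :=
  Real.sq_sqrt (by positivity)

lemma abs_sub_le_sqrt_discrim (a b d : ℝ) : |a - d| ≤ √((a - d) ^ 2 + 4 * b ^ 2) :=
  Real.abs_le_sqrt (by nlinarith [sq_nonneg b])

lemma eigMin2_le_left : eigMin2 a b d ≤ a := by
  have := abs_le.mp (abs_sub_le_sqrt_discrim a b d)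
  unfold eigMin2; linarith

lemma eigMin2_le_right : eigMin2 a b d ≤ d := by
  have := abs_le.mp (abs_sub_le_sqrt_discrim a b d)
  unfold eigMin2; linarith

lemma left_le_eigMax2 : a ≤ eigMax2 a b d := by
  have := abs_le.mp (abs_sub_le_sqrt_discrim a b d)
  unfold eigMax2; linarith

lemma right_le_eigMax2 : d ≤ eigMax2 a b d := by
  have := abs_le.mp (abs_sub_le_sqrt_discrim a b d)
  unfold eigMax2; linarith

lemma sub_eigMin2_mul_sub_eigMin2 (a b d : ℝ) :
    (a - eigMin2 a b d) * (d - eigMin2 a b d) = b ^ 2 := by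
  unfold eigMin2; linear_combination sqrt_discrim_sq a b d / 4

lemma eigMax2_sub_mul_eigMax2_sub (a b d : ℝ) :
    (eigMax2 a b d - a) * (eigMax2 a b d - d) = b ^ 2 := by
  unfold eigMax2; linear_combination sqrt_discrim_sq a b d / 4

lemma eigMin2_pos (ha : 0 < a) (h : b ^ 2 < a * d) : 0 < eigMin2 a b d := by
  have hd : 0 < d := pos_of_mul_pos_right (h.trans_le' (sq_nonneg b)) ha.le
  have : √((a - d) ^ 2 + 4 * b ^ 2) < a + d :=
    (Real.sqrt_lt' (by linarith)).mpr (by nlinarith)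
  unfold eigMin2; linarith

end Eigenvalues

lemma proj_transpose (y : Fin 3 → ℝ) : (proj y)ᵀ = proj y := by
  simp [proj, transpose_vecMulVec]

lemma proj_mul_self {y : Fin 3 → ℝ} (hy : y ⬝ᵥ y = 1) : proj y * proj y = proj y := by
  simp [proj, sub_mul, mul_sub, vecMulVec_mul_vecMulVec, hy]

lemma proj_mulVec (y v : Fin 3 → ℝ) : proj y *ᵥ v = v - (y ⬝ᵥ v) • y := by
  simp [proj, sub_mulVec, vecMulVec_mulVec]

lemma dotProduct_proj_mulVec_le (y v : Fin 3 → ℝ) : v ⬝ᵥ (proj y *ᵥ v) ≤ v ⬝ᵥ v := by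
  rw [proj_mulVec, dotProduct_sub, dotProduct_smul, dotProduct_comm v y, smul_eq_mul]
  linarith [mul_self_nonneg (y ⬝ᵥ v)]

lemma dotProduct_proj_mulVec_s12 {y : Fin 3 → ℝ} (hy : y ⬝ᵥ y = 1) (u v : Fin 3 → ℝ) :
    u ⬝ᵥ (proj y *ᵥ v) = (proj y *ᵥ u) ⬝ᵥ (proj y *ᵥ v) :=
  dotProduct_mulVec_eq_of_mul_self (proj_transpose y) (proj_mul_self hy) u v

lemma proj_mulVec_dotProduct_self_le {y : Fin 3 → ℝ} (hy : y ⬝ᵥ y = 1) (v : Fin 3 → ℝ) :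
    (proj y *ᵥ v) ⬝ᵥ (proj y *ᵥ v) ≤ v ⬝ᵥ v :=
  (dotProduct_proj_mulVec_s12 hy v v).symm.trans_le (dotProduct_proj_mulVec_le y v)

section SumProj

variable {ι : Type*} [Fintype ι] {y : ι → Fin 3 → ℝ}

lemma sum_proj_transpose (y : ι → Fin 3 → ℝ) : (∑ i, proj (y i))ᵀ = ∑ i, proj (y i) := by
  simp [transpose_sum, proj_transpose]

lemma dotProduct_sum_proj_mulVec (hy : ∀ i, y i ⬝ᵥ y i = 1) (u v : Fin 3 → ℝ) :
    u ⬝ᵥ ((∑ i, proj (y i)) *ᵥ v) = ∑ i, (proj (y i) *ᵥ u) ⬝ᵥ (proj (y i) *ᵥ v) := by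
  rw [sum_mulVec, dotProduct_sum]
  exact sum_congr rfl fun i _ => dotProduct_proj_mulVec_s12 (hy i) u v

lemma sum_proj_mulVec_dotProduct_self_le (hy : ∀ i, y i ⬝ᵥ y i = 1) (u : Fin 3 → ℝ) :
    ((∑ i, proj (y i)) *ᵥ u) ⬝ᵥ ((∑ i, proj (y i)) *ᵥ u)
      ≤ Fintype.card ι * (u ⬝ᵥ ((∑ i, proj (y i)) *ᵥ u)) := by
  rw [dotProduct_sum_proj_mulVec hy u u, sum_mulVec, ← card_univ]
  exact sum_dotProduct_sum_le univ fun i => proj (y i) *ᵥ u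

lemma sum_proj_quadratic_nonneg (hy : ∀ i, y i ⬝ᵥ y i = 1) {α β γ : ℝ} (hα : 0 ≤ α)
    (hγ : 0 ≤ γ) (h : β ^ 2 ≤ α * γ) (u v : Fin 3 → ℝ) :
    0 ≤ α * (u ⬝ᵥ ((∑ i, proj (y i)) *ᵥ u)) + 2 * β * (u ⬝ᵥ ((∑ i, proj (y i)) *ᵥ v))
      + γ * (Fintype.card ι * (v ⬝ᵥ v)) := by
  have term (i : ι) : 0 ≤ α * ((proj (y i) *ᵥ u) ⬝ᵥ (proj (y i) *ᵥ u))
      + 2 * β * ((proj (y i) *ᵥ u) ⬝ᵥ (proj (y i) *ᵥ v)) + γ * (v ⬝ᵥ v) := by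
    have := quadratic_dotProduct_nonneg hα hγ h (proj (y i) *ᵥ u) (proj (y i) *ᵥ v)
    have := mul_le_mul_of_nonneg_left (proj_mulVec_dotProduct_self_le (hy i) v) hγ
    linarith
  have hcard : γ * (Fintype.card ι * (v ⬝ᵥ v)) = ∑ _ : ι, γ * (v ⬝ᵥ v) := by
    simp [mul_left_comm]
  rw [dotProduct_sum_proj_mulVec hy, dotProduct_sum_proj_mulVec hy, mul_sum, mul_sum, hcard,
    ← sum_add_distrib, ← sum_add_distrib]
  exact sum_nonneg fun i _ => term i

end SumProj

lemma dotProduct_transpose_mul_mulVec_le {n : Type*} [Fintype n] [DecidableEq n]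
    (P : Matrix n n ℝ) (c4 c5 : ℝ) (u v : n → ℝ) :
    Sum.elim u v ⬝ᵥ (((fromBlocks 0 (-1) (c4 • P) (c5 • 1) : Matrix (n ⊕ n) (n ⊕ n) ℝ)ᵀ *
        fromBlocks 0 (-1) (c4 • P) (c5 • 1)) *ᵥ Sum.elim u v)
      ≤ eigMax2 (c4 ^ 2) (c5 * c4) (c5 ^ 2 + 1) * ((P *ᵥ u) ⬝ᵥ (P *ᵥ u) + v ⬝ᵥ v) := by
  have hdisc := eigMax2_sub_mul_eigMax2_sub (c4 ^ 2) (c5 * c4) (c5 ^ 2 + 1)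
  have := quadratic_dotProduct_nonneg (β := -(c5 * c4)) (sub_nonneg.mpr left_le_eigMax2)
    (sub_nonneg.mpr right_le_eigMax2) (by rw [neg_sq, hdisc]) (P *ᵥ u) v
  rw [dotProduct_transpose_mul_mulVec]
  simp only [fromBlocks_mulVec, Sum.elim_comp_inl, Sum.elim_comp_inr, zero_mulVec, zero_add,
    neg_mulVec, one_mulVec, smul_mulVec, sumElim_dotProduct_sumElim, neg_dotProduct_neg,
    dotProduct_add, add_dotProduct, dotProduct_smul, smul_dotProduct, smul_eq_mul,
    dotProduct_comm v (P *ᵥ u)]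
  linarith

lemma eigMin2_mul_le_dotProduct_fromBlocks_mulVec {ι : Type*} [Fintype ι]
    {y : ι → Fin 3 → ℝ} (hy : ∀ i, y i ⬝ᵥ y i = 1) (c1 c2 c3 : ℝ) (u v : Fin 3 → ℝ) :
    eigMin2 c3 c2 c1 * (u ⬝ᵥ ((∑ i, proj (y i)) *ᵥ u) + Fintype.card ι * (v ⬝ᵥ v))
      ≤ Sum.elim u v ⬝ᵥ (fromBlocks (c3 • ∑ i, proj (y i)) (c2 • ∑ i, proj (y i))
          (c2 • ∑ i, proj (y i)) ((Fintype.card ι * c1) • 1) *ᵥ Sum.elim u v) := by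
  have := sum_proj_quadratic_nonneg hy (sub_nonneg.mpr eigMin2_le_left)
    (sub_nonneg.mpr eigMin2_le_right) (sub_eigMin2_mul_sub_eigMin2 c3 c2 c1).symm.le u v
  rw [sumElim_dotProduct_fromBlocks_mulVec]
  simp only [smul_mulVec, one_mulVec, dotProduct_smul, smul_eq_mul]
  rw [dotProduct_mulVec_comm (sum_proj_transpose y) v u]
  linarith

theorem stmt12_general
    (m : ℕ) (hm : 1 ≤ m) (c1 c2 c3 c4 c5 : ℝ)
    (hc3 : 0 < c3)
    (hdet : c1 * c3 > c2 ^ 2) :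
    ∃ c : ℝ, 0 < c ∧
      c = eigMax2 (c4 ^ 2) (c5 * c4) (c5 ^ 2 + 1) / eigMin2 c3 c2 c1 * (m : ℝ) ∧
      ∀ y : Fin m → (Fin 3 → ℝ), (∀ i, y i ⬝ᵥ y i = 1) →
        (c • (Matrix.fromBlocks
              (c3 • ∑ i, proj (y i)) (c2 • ∑ i, proj (y i))
              (c2 • ∑ i, proj (y i)) (((m : ℝ) * c1) • 1)
            : Matrix (Fin 3 ⊕ Fin 3) (Fin 3 ⊕ Fin 3) ℝ) -
          (Matrix.fromBlocks 0 (-1) (c4 • ∑ i, proj (y i)) (c5 • 1)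
            : Matrix (Fin 3 ⊕ Fin 3) (Fin 3 ⊕ Fin 3) ℝ)ᵀ *
          (Matrix.fromBlocks 0 (-1) (c4 • ∑ i, proj (y i)) (c5 • 1))).PosSemidef := by
  set lQ := eigMin2 c3 c2 c1
  set lA := eigMax2 (c4 ^ 2) (c5 * c4) (c5 ^ 2 + 1)
  have hlQ : 0 < lQ := eigMin2_pos hc3 (by linarith)
  have hlA : 0 < lA := (by positivity : (0 : ℝ) < c5 ^ 2 + 1).trans_le right_le_eigMax2
  have hm' : (1 : ℝ) ≤ m := by exact_mod_cast hm
  refine ⟨lA / lQ * m, by positivity, rfl, fun y hy => ?_⟩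
  refine .of_dotProduct_mulVec_nonneg ?_ fun x => ?_
  · simp [IsHermitian, conjTranspose_eq_transpose_of_trivial, fromBlocks_transpose,
      sum_proj_transpose y]
  · obtain ⟨u, v, rfl⟩ : ∃ u v, x = Sum.elim u v :=
      ⟨x ∘ Sum.inl, x ∘ Sum.inr, (Sum.elim_comp_inl_inr x).symm⟩
    have hA := dotProduct_transpose_mul_mulVec_le (∑ i, proj (y i)) c4 c5 u v
    have hQ := eigMin2_mul_le_dotProduct_fromBlocks_mulVec hy c1 c2 c3 u v
    have hPu := sum_proj_mulVec_dotProduct_self_le hy u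
    have hv := dotProduct_self_nonneg v
    simp only [Fintype.card_fin] at hQ hPu
    simp only [star_trivial, sub_mulVec, dotProduct_sub, smul_mulVec, dotProduct_smul,
      smul_eq_mul, sub_nonneg]
    set P := ∑ i, proj (y i)
    calc _ ≤ lA * ((P *ᵥ u) ⬝ᵥ (P *ᵥ u) + v ⬝ᵥ v) := hA
      _ ≤ lA * m * (u ⬝ᵥ (P *ᵥ u) + m * (v ⬝ᵥ v)) := by
        have hm2 : (1 : ℝ) ≤ m * m := one_le_mul_of_one_le_of_one_le hm' hm'
        nlinarith [mul_le_mul_of_nonneg_left hPu hlA.le,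
          mul_nonneg (mul_nonneg hlA.le hv) (sub_nonneg.mpr hm2)]
      _ = lA / lQ * m * (lQ * (u ⬝ᵥ (P *ᵥ u) + m * (v ⬝ᵥ v))) := by field_simp
      _ ≤ _ := by gcongr

/-- appendix Lemma: for unit vectors `y₁,…,y_m` and positive constants
`c₁,…,c₅` with `c₁c₃ > c₂²`, with `A = [[0, −I],[c₄Σπ_{y_i}, c₅I]]` and
`Q = [[c₃Σπ_{y_i}, c₂Σπ_{y_i}],[c₂Σπ_{y_i}, mc₁I]]`, there exists `c > 0`, depending only
on `c₁,…,c₅` and `m` — one may take `c = (l_A/l_Q)·m` with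
`l_Q = λ_min([[c₃,c₂],[c₂,c₁]])` and `l_A = λ_max([[c₄²,c₅c₄],[c₅c₄,c₅²+1]])` — such
that `cQ − AᵀA ≥ 0`. -/
theorem stmt12
    (m : ℕ) (hm : 1 ≤ m) (c1 c2 c3 c4 c5 : ℝ)
    (hc1 : 0 < c1) (hc2 : 0 < c2) (hc3 : 0 < c3) (hc4 : 0 < c4) (hc5 : 0 < c5)
    (hdet : c1 * c3 > c2 ^ 2) :
    ∃ c : ℝ, 0 < c ∧
      c = eigMax2 (c4 ^ 2) (c5 * c4) (c5 ^ 2 + 1) / eigMin2 c3 c2 c1 * (m : ℝ) ∧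
      ∀ y : Fin m → (Fin 3 → ℝ), (∀ i, y i ⬝ᵥ y i = 1) →
        (c • (Matrix.fromBlocks
              (c3 • ∑ i, proj (y i)) (c2 • ∑ i, proj (y i))
              (c2 • ∑ i, proj (y i)) (((m : ℝ) * c1) • 1)
            : Matrix (Fin 3 ⊕ Fin 3) (Fin 3 ⊕ Fin 3) ℝ) -
          (Matrix.fromBlocks 0 (-1) (c4 • ∑ i, proj (y i)) (c5 • 1)
            : Matrix (Fin 3 ⊕ Fin 3) (Fin 3 ⊕ Fin 3) ℝ)ᵀ *
          (Matrix.fromBlocks 0 (-1) (c4 • ∑ i, proj (y i)) (c5 • 1))).PosSemidef :=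
  stmt12_general m hm c1 c2 c3 c4 c5 hc3 hdet
end
end

section
/- Under the hypotheses of the PE-Lyapunov exponential stability theorem — ẋ = f(x,t) with f(0,t) = 0, λ₁‖x‖² ≤ 𝓛_x(t) ≤ λ₂‖x‖², d𝓛_x/dt ≤ −γ xᵀΣ(t)x with Σ(t) ≥ 0, ‖Σ(t)‖ ≤ λ_Σ, Σ PE with constants T, μ, and d𝓛_x/dt ≤ −(1/c)‖f(x,t)‖² — the Lyapunov function satisfies, for every t ≥ 0, the one-period contraction 𝓛_x(t+T) ≤ (1−σ) 𝓛_x(t), where σ = ρμTγ/((1+ρ)(1+ρ c T² γ λ_Σ) λ₂) and ρ > 0 is arbitrary; with the choice ρ = λ₂/(μTγ) one gets σ = 1/((1+ρ)(1+ρ c T² γ λ_Σ)) < 1. -/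
open Matrix MeasureTheory

noncomputable section

def sigmaOf (ρ μ T γ c lamS lam2 : ℝ) : ℝ :=
  ρ * μ * T * γ / ((1 + ρ) * (1 + ρ * c * T ^ 2 * γ * lamS) * lam2)

/-!
Write `v = x t` and `Δ = 𝓛(t) - 𝓛(t + T)`. Since `d𝓛/dt ≤ -‖ẋ‖² / c`, the displacement
`‖x τ - v‖` is fenced on the period by `k (τ - t) / 2 + c (𝓛(t) - 𝓛(τ)) / (2 k)` for every `k > 0`
(a differential form of Cauchy–Schwarz), so `‖x τ - v‖² ≤ c T Δ`. The Young-type inequality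
`(a + e)ᵀΣ(a + e) ≥ ρ/(1+ρ) aᵀΣa - ρ eᵀΣe` then gives
`xᵀΣx ≥ ρ/(1+ρ) vᵀΣv - ρ λ_Σ c T Δ` along the period. Integrating `d𝓛/dt ≤ -γ xᵀΣx` and using
persistent excitation, `∫ vᵀΣv ≥ T μ ‖v‖² ≥ T μ 𝓛(t) / λ₂`, yields
`(1 + ρ c T² γ λ_Σ) Δ ≥ ρ/(1+ρ) γ T μ 𝓛(t) / λ₂`, that is `Δ ≥ σ 𝓛(t)`.
-/

open Set

lemma sq_le_mul_of_forall_pos_two_mul_le {A B d : ℝ} (hA : 0 ≤ A) (hB : 0 ≤ B) (hd : 0 ≤ d)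
    (h : ∀ k, 0 < k → 2 * k * d ≤ A * k ^ 2 + B) : d ^ 2 ≤ A * B := by
  have hquad : ∀ k, 0 ≤ A * (k * k) + (-2 * d) * k + B := fun k => by
    rcases le_or_gt k 0 with hk | hk
    · nlinarith [mul_nonneg hA (mul_self_nonneg k)]
    · nlinarith [h k hk]
  have := discrim_le_zero hquad
  rw [discrim] at this
  nlinarith

lemma norm_sub_sq_le_of_hasDerivAt_le_neg_norm_sq {E : Type*} [NormedAddCommGroup E]
    [NormedSpace ℝ E] {y y' : ℝ → E} {V V' : ℝ → ℝ} {a b c : ℝ} (hab : a ≤ b) (hc : 0 < c)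
    (hy : ∀ s ∈ Icc a b, HasDerivAt y (y' s) s) (hV : ∀ s ∈ Icc a b, HasDerivAt V (V' s) s)
    (hV' : ∀ s ∈ Icc a b, V' s ≤ -(1 / c) * ‖y' s‖ ^ 2) :
    ∀ τ ∈ Icc a b, ‖y τ - y a‖ ^ 2 ≤ (b - a) * (c * (V a - V b)) := by
  have hy' : ∀ s ∈ Icc a b, ‖y' s‖ ^ 2 ≤ c * -V' s := fun s hs => by
    have := hV' s hs
    rw [neg_mul, le_neg, one_div_mul_eq_div, div_le_iff₀ hc] at this
    linarith
  have hanti : AntitoneOn V (Icc a b) := by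
    refine antitoneOn_of_hasDerivWithinAt_nonpos (convex_Icc a b)
      (fun s hs => (hV s hs).continuousAt.continuousWithinAt)
      (fun s hs => (hV s (interior_subset hs)).hasDerivWithinAt) fun s hs => ?_
    nlinarith [hy' s (interior_subset hs), sq_nonneg ‖y' s‖]
  intro τ hτ
  refine sq_le_mul_of_forall_pos_two_mul_le (by linarith)
    (mul_nonneg hc.le (sub_nonneg.2 (hanti (left_mem_Icc.2 hab) (right_mem_Icc.2 hab) hab)))
    (norm_nonneg _) fun k hk => ?_
  set B : ℝ → ℝ := fun s => k * (s - a) / 2 + c * (V a - V s) / (2 * k)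
  have hB : ∀ s ∈ Icc a b, HasDerivAt B (k / 2 + c * -V' s / (2 * k)) s := fun s hs => by
    refine ((((hasDerivAt_id s).sub_const a).const_mul k |>.div_const 2).add
      ((((hV s hs).const_sub (V a)).const_mul c).div_const (2 * k))).congr_deriv ?_
    ring
  have hfence := image_norm_le_of_norm_deriv_right_le_deriv_boundary' (B := B)
    (fun s hs => ((hy s hs).sub_const (y a)).continuousAt.continuousWithinAt)
    (fun s hs => ((hy s (Ico_subset_Icc_self hs)).sub_const (y a)).hasDerivWithinAt)
    (by simp [B]) (fun s hs => (hB s hs).continuousAt.continuousWithinAt)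
    (fun s hs => (hB s (Ico_subset_Icc_self hs)).hasDerivWithinAt) (fun s hs => ?_)
    hτ
  · have := mul_le_mul_of_nonneg_left hfence (by positivity : (0 : ℝ) ≤ 2 * k)
    simp only [B] at this
    field_simp at this
    nlinarith [hanti hτ (right_mem_Icc.2 hab) hτ.2, hτ.1, hτ.2]
  · rw [← sub_nonneg]
    have key : k / 2 + c * -V' s / (2 * k) - ‖y' s‖
        = ((‖y' s‖ - k) ^ 2 + (c * -V' s - ‖y' s‖ ^ 2)) / (2 * k) := by
      field_simp
      ring
    rw [key]
    have := hy' s (Ico_subset_Icc_self hs)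
    positivity

lemma euclNorm_sq {ι : Type*} [Fintype ι] (z : ι → ℝ) : euclNorm z ^ 2 = z ⬝ᵥ z :=
  Real.sq_sqrt (Finset.sum_nonneg fun i _ => mul_self_nonneg (z i))

lemma norm_toLp_eq_euclNorm {ι : Type*} [Fintype ι] (z : ι → ℝ) :
    ‖(WithLp.toLp 2 z : EuclideanSpace ℝ ι)‖ = euclNorm z := by
  simp [EuclideanSpace.norm_eq, euclNorm, sq]

lemma dotProduct_sub_le_of_hasDerivAt_le_neg_euclNorm_sq {ι : Type*} [Fintype ι]
    {x x' : ℝ → ι → ℝ} {V V' : ℝ → ℝ} {a b c : ℝ} (hab : a ≤ b) (hc : 0 < c)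
    (hx : ∀ s ∈ Icc a b, HasDerivAt x (x' s) s) (hV : ∀ s ∈ Icc a b, HasDerivAt V (V' s) s)
    (hV' : ∀ s ∈ Icc a b, V' s ≤ -(1 / c) * euclNorm (x' s) ^ 2) :
    ∀ τ ∈ Icc a b, (x τ - x a) ⬝ᵥ (x τ - x a) ≤ (b - a) * (c * (V a - V b)) := by
  let e := (EuclideanSpace.equiv ι ℝ).symm
  intro τ hτ
  have := norm_sub_sq_le_of_hasDerivAt_le_neg_norm_sq (y := fun s => e (x s))
    (y' := fun s => e (x' s)) hab hc (fun s hs => e.hasFDerivAt.comp_hasDerivAt s (hx s hs)) hV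
    (fun s hs => by simpa [e, norm_toLp_eq_euclNorm] using hV' s hs) τ hτ
  rwa [← euclNorm_sq, ← norm_toLp_eq_euclNorm, WithLp.toLp_sub]

lemma sub_le_mul_integral_add_mul_of_hasDerivAt {V V' q : ℝ → ℝ} {a b α β : ℝ} (hab : a ≤ b)
    (hV : ∀ s ∈ Icc a b, HasDerivAt V (V' s) s) (hq : IntervalIntegrable q volume a b)
    (h : ∀ s ∈ Ioo a b, V' s ≤ α * q s + β) :
    V b - V a ≤ α * (∫ s in a..b, q s) + β * (b - a) := by
  have hαq : IntervalIntegrable (fun s => α * q s + β) volume a b :=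
    (hq.const_mul α).add intervalIntegrable_const
  have := intervalIntegral.sub_le_integral_of_hasDeriv_right_of_le hab
    (fun s hs => (hV s hs).continuousAt.continuousWithinAt)
    (fun s hs => (hV s (Ioo_subset_Icc_self hs)).hasDerivWithinAt)
    ((intervalIntegrable_iff_integrableOn_Icc_of_le hab).1 hαq) h
  rwa [intervalIntegral.integral_add (hq.const_mul α) intervalIntegrable_const,
    intervalIntegral.integral_const_mul, intervalIntegral.integral_const, smul_eq_mul,
    mul_comm (b - a)] at this

namespace Matrix

variable {n : Type*} [Fintype n]

section

variable {M : Matrix n n ℝ}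

lemma IsHermitian.dotProduct_mulVec_comm (hM : M.IsHermitian) (u w : n → ℝ) :
    u ⬝ᵥ M *ᵥ w = w ⬝ᵥ M *ᵥ u := by
  rw [← dotProduct_transpose_mulVec, ← conjTranspose_eq_transpose_of_trivial, hM.eq]

namespace PosSemidef

lemma dotProduct_mulVec_sq_le (hM : M.PosSemidef) (u w : n → ℝ) :
    (u ⬝ᵥ M *ᵥ w) ^ 2 ≤ (u ⬝ᵥ M *ᵥ u) * (w ⬝ᵥ M *ᵥ w) := by
  have hquad : ∀ s : ℝ,
      0 ≤ (w ⬝ᵥ M *ᵥ w) * (s * s) + 2 * (u ⬝ᵥ M *ᵥ w) * s + u ⬝ᵥ M *ᵥ u := fun s => by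
    have := hM.dotProduct_mulVec_nonneg (u + s • w)
    simp only [star_trivial, mulVec_add, mulVec_smul, dotProduct_add, add_dotProduct,
      dotProduct_smul, smul_dotProduct, smul_eq_mul, hM.isHermitian.dotProduct_mulVec_comm w u]
      at this
    linarith
  have := discrim_le_zero hquad
  rw [discrim] at this
  nlinarith

lemma abs_apply_le (hM : M.PosSemidef) {C : ℝ} (hC : ∀ z, z ⬝ᵥ M *ᵥ z ≤ C * (z ⬝ᵥ z))
    (i j : n) : |M i j| ≤ C := by
  classical
  have hdiag : ∀ k, M k k ≤ C := fun k => by simpa using hC (Pi.single k 1)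
  have hcs : M i j ^ 2 ≤ M i i * M j j := by
    simpa using hM.dotProduct_mulVec_sq_le (Pi.single i 1) (Pi.single j 1)
  refine abs_le_of_sq_le_sq ?_ (hM.diag_nonneg.trans (hdiag i))
  nlinarith [hdiag i, hdiag j, hM.diag_nonneg (i := i), hM.diag_nonneg (i := j)]

lemma div_one_add_mul_sub_le_dotProduct_mulVec_add (hM : M.PosSemidef) (a e : n → ℝ)
    {ρ : ℝ} (hρ : 0 < ρ) :
    ρ / (1 + ρ) * (a ⬝ᵥ M *ᵥ a) - ρ * (e ⬝ᵥ M *ᵥ e) ≤ (a + e) ⬝ᵥ M *ᵥ (a + e) := by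
  set w := (1 + ρ)⁻¹ • a + e
  have hw : (a + e) ⬝ᵥ M *ᵥ (a + e) - (ρ / (1 + ρ) * (a ⬝ᵥ M *ᵥ a) - ρ * (e ⬝ᵥ M *ᵥ e))
      = (1 + ρ) * (w ⬝ᵥ M *ᵥ w) := by
    simp only [w, mulVec_add, mulVec_smul, dotProduct_add, add_dotProduct,
      dotProduct_smul, smul_dotProduct, smul_eq_mul, hM.isHermitian.dotProduct_mulVec_comm e a]
    field_simp
    ring
  have := hM.dotProduct_mulVec_nonneg w
  rw [star_trivial] at this
  nlinarith

lemma mul_dotProduct_self_le [DecidableEq n] {A : Matrix n n ℝ} {μ : ℝ}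
    (h : (A - μ • 1).PosSemidef) (v : n → ℝ) : μ * (v ⬝ᵥ v) ≤ v ⬝ᵥ A *ᵥ v := by
  have := h.dotProduct_mulVec_nonneg v
  simpa [sub_mulVec, smul_mulVec, dotProduct_sub] using this

end PosSemidef

end

lemma dotProduct_mulVec_eq_sum (u w : n → ℝ) (N : Matrix n n ℝ) :
    u ⬝ᵥ N *ᵥ w = ∑ i, ∑ j, u i * w j * N i j := by
  simp only [dotProduct, mulVec, Finset.mul_sum]
  exact Finset.sum_congr rfl fun i _ => Finset.sum_congr rfl fun j _ => by ring

variable {M : ℝ → Matrix n n ℝ} {a b : ℝ}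

lemma intervalIntegrable_dotProduct_mulVec
    (hM : ∀ i j, IntervalIntegrable (fun τ => M τ i j) volume a b) (u w : n → ℝ) :
    IntervalIntegrable (fun τ => u ⬝ᵥ M τ *ᵥ w) volume a b := by
  simpa only [dotProduct_mulVec_eq_sum, Finset.sum_fn] using IntervalIntegrable.sum Finset.univ
    fun i _ => IntervalIntegrable.sum Finset.univ fun j _ => (hM i j).const_mul (u i * w j)

lemma intervalIntegral_dotProduct_mulVec
    (hM : ∀ i j, IntervalIntegrable (fun τ => M τ i j) volume a b) (u w : n → ℝ) :
    ∫ τ in a..b, u ⬝ᵥ M τ *ᵥ w = u ⬝ᵥ (of fun i j => ∫ τ in a..b, M τ i j) *ᵥ w := by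
  simp only [dotProduct_mulVec_eq_sum, of_apply]
  rw [intervalIntegral.integral_finsetSum fun i _ => by
    simpa only [Finset.sum_fn] using
      IntervalIntegrable.sum Finset.univ fun j _ => (hM i j).const_mul (u i * w j)]
  refine Finset.sum_congr rfl fun i _ => ?_
  rw [intervalIntegral.integral_finsetSum fun j _ => (hM i j).const_mul _]
  exact Finset.sum_congr rfl fun j _ => intervalIntegral.integral_const_mul _ _

lemma intervalIntegrable_apply_of_posSemidef (hab : a ≤ b)
    (hmeas : ∀ i j, Measurable fun τ => M τ i j) {C : ℝ} (hpsd : ∀ τ ∈ Icc a b, (M τ).PosSemidef)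
    (hC : ∀ τ ∈ Icc a b, ∀ z, z ⬝ᵥ M τ *ᵥ z ≤ C * (z ⬝ᵥ z)) (i j : n) :
    IntervalIntegrable (fun τ => M τ i j) volume a b :=
  (intervalIntegrable_const (c := C)).mono_fun' (hmeas i j).aestronglyMeasurable <|
    (ae_restrict_iff' measurableSet_uIoc).2 <| ae_of_all _ fun τ hτ => by
      have hτ' : τ ∈ Icc a b := Ioc_subset_Icc_self (uIoc_of_le hab ▸ hτ)
      simpa using (hpsd τ hτ').abs_apply_le (hC τ hτ') i j

lemma mul_mul_dotProduct_self_le_integral [DecidableEq n] {T μ : ℝ} (hT : 0 < T)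
    (hM : ∀ i j, IntervalIntegrable (fun τ => M τ i j) volume a (a + T))
    (hPE : ((T⁻¹ • of fun i j => ∫ τ in a..(a + T), M τ i j) - μ • 1).PosSemidef)
    (v : n → ℝ) : T * μ * (v ⬝ᵥ v) ≤ ∫ τ in a..a + T, v ⬝ᵥ M τ *ᵥ v := by
  have := hPE.mul_dotProduct_self_le v
  rw [smul_mulVec, dotProduct_smul, smul_eq_mul, ← intervalIntegral_dotProduct_mulVec hM,
    le_inv_mul_iff₀ hT] at this
  linarith

end Matrix

lemma le_one_sub_sigmaOf_mul {ρ μ T γ c lamS lam2 q I L₀ L₁ : ℝ} (hρ : 0 < ρ) (hμ : 0 < μ)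
    (hT : 0 < T) (hγ : 0 < γ) (hc : 0 < c) (hlamS : 0 ≤ lamS) (hlam2 : 0 < lam2)
    (hq : L₀ ≤ lam2 * q) (hI : T * μ * q ≤ I)
    (h : L₁ - L₀ ≤ -(γ * (ρ / (1 + ρ))) * I + γ * ρ * lamS * (T * (c * (L₀ - L₁))) * T) :
    L₁ ≤ (1 - sigmaOf ρ μ T γ c lamS lam2) * L₀ := by
  have hD : 0 < 1 + ρ * c * T ^ 2 * γ * lamS := by positivity
  have hdrop : γ * (ρ / (1 + ρ)) * (T * μ * q) ≤ (L₀ - L₁) * (1 + ρ * c * T ^ 2 * γ * lamS) := by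
    have : 0 ≤ γ * (ρ / (1 + ρ)) := by positivity
    nlinarith
  suffices sigmaOf ρ μ T γ c lamS lam2 * L₀ ≤ L₀ - L₁ by linarith
  calc sigmaOf ρ μ T γ c lamS lam2 * L₀ ≤ sigmaOf ρ μ T γ c lamS lam2 * (lam2 * q) :=
        mul_le_mul_of_nonneg_left hq (by unfold sigmaOf; positivity)
    _ = γ * (ρ / (1 + ρ)) * (T * μ * q) / (1 + ρ * c * T ^ 2 * γ * lamS) := by
        unfold sigmaOf; field_simp
    _ ≤ L₀ - L₁ := by rwa [div_le_iff₀ hD]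

lemma sigmaOf_eq_of_mul_eq {ρ μ T γ c lamS lam2 : ℝ} (h : ρ * μ * T * γ = lam2)
    (hlam2 : lam2 ≠ 0) :
    sigmaOf ρ μ T γ c lamS lam2 = 1 / ((1 + ρ) * (1 + ρ * c * T ^ 2 * γ * lamS)) := by
  rw [sigmaOf, h, div_mul_cancel_right₀ hlam2, one_div]

lemma sigmaOf_lt_one_of_mul_eq {ρ μ T γ c lamS lam2 : ℝ} (h : ρ * μ * T * γ = lam2)
    (hlam2 : lam2 ≠ 0) (hρ : 0 < ρ) (hc : 0 ≤ c) (hγ : 0 ≤ γ) (hlamS : 0 ≤ lamS) :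
    sigmaOf ρ μ T γ c lamS lam2 < 1 := by
  rw [sigmaOf_eq_of_mul_eq h hlam2, div_lt_one (by positivity)]
  have : 0 ≤ ρ * c * T ^ 2 * γ * lamS := by positivity
  nlinarith

theorem stmt16_general
    (d : ℕ) (f : (Fin d → ℝ) → ℝ → (Fin d → ℝ)) (L : ℝ → (Fin d → ℝ) → ℝ)
    (Sig : ℝ → Matrix (Fin d) (Fin d) ℝ)
    (lam1 lam2 lamS γ c T μ : ℝ)
    (hlam2 : 0 < lam2) (hlamS : 0 < lamS)
    (hγ : 0 < γ) (hc : 0 < c) (hT : 0 < T) (hμ : 0 < μ)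
    (hSmeas : ∀ i j : Fin d, Measurable fun t => Sig t i j)
    (hSpsd : ∀ t : ℝ, 0 ≤ t → (Sig t).PosSemidef)
    (hSbound : ∀ t : ℝ, 0 ≤ t → ∀ z : Fin d → ℝ,
      z ⬝ᵥ (Sig t).mulVec z ≤ lamS * (z ⬝ᵥ z))
    (hPE : ∀ t : ℝ, 0 ≤ t →
      ((T⁻¹ • Matrix.of fun i j => ∫ τ in t..(t + T), Sig τ i j) -
        μ • (1 : Matrix (Fin d) (Fin d) ℝ)).PosSemidef)
    (hL : ∀ t : ℝ, 0 ≤ t → ∀ z : Fin d → ℝ,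
      lam1 * euclNorm z ^ 2 ≤ L t z ∧ L t z ≤ lam2 * euclNorm z ^ 2)
    (x : ℝ → (Fin d → ℝ)) (hsol : ∀ t : ℝ, 0 ≤ t → HasDerivAt x (f (x t) t) t)
    (DL : ℝ → ℝ)
    (hLd : ∀ t : ℝ, 0 ≤ t → HasDerivAt (fun s => L s (x s)) (DL t) t)
    (ha : ∀ t : ℝ, 0 ≤ t → DL t ≤ -γ * (x t ⬝ᵥ (Sig t).mulVec (x t)))
    (hcc : ∀ t : ℝ, 0 ≤ t → DL t ≤ -(1 / c) * euclNorm (f (x t) t) ^ 2) :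
    (∀ ρ : ℝ, 0 < ρ → ∀ t : ℝ, 0 ≤ t →
      L (t + T) (x (t + T)) ≤ (1 - sigmaOf ρ μ T γ c lamS lam2) * L t (x t)) ∧
    (sigmaOf (lam2 / (μ * T * γ)) μ T γ c lamS lam2 =
        1 / ((1 + lam2 / (μ * T * γ)) *
          (1 + (lam2 / (μ * T * γ)) * c * T ^ 2 * γ * lamS)) ∧
      sigmaOf (lam2 / (μ * T * γ)) μ T γ c lamS lam2 < 1) := by
  refine ⟨fun ρ hρ t ht => ?_, ?_⟩
  · have htT : t ≤ t + T := by linarith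
    have hnn : ∀ s ∈ Icc t (t + T), 0 ≤ s := fun s hs => ht.trans hs.1
    set v := x t
    set W := T * (c * (L t v - L (t + T) (x (t + T))))
    have hdisp : ∀ τ ∈ Icc t (t + T), (x τ - v) ⬝ᵥ (x τ - v) ≤ W := by
      simpa using dotProduct_sub_le_of_hasDerivAt_le_neg_euclNorm_sq htT hc
        (fun s hs => hsol s (hnn s hs)) (fun s hs => hLd s (hnn s hs))
        fun s hs => hcc s (hnn s hs)
    have hlower : ∀ τ ∈ Icc t (t + T),
        ρ / (1 + ρ) * (v ⬝ᵥ Sig τ *ᵥ v) - ρ * (lamS * W) ≤ x τ ⬝ᵥ Sig τ *ᵥ x τ := fun τ hτ => by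
      have hyoung :=
        (hSpsd τ (hnn τ hτ)).div_one_add_mul_sub_le_dotProduct_mulVec_add v (x τ - v) hρ
      have hpert := (hSbound τ (hnn τ hτ) (x τ - v)).trans
        (mul_le_mul_of_nonneg_left (hdisp τ hτ) hlamS.le)
      rw [add_sub_cancel] at hyoung
      linarith [mul_le_mul_of_nonneg_left hpert hρ.le]
    have hSint := intervalIntegrable_apply_of_posSemidef htT hSmeas
      (fun τ hτ => hSpsd τ (hnn τ hτ)) fun τ hτ => hSbound τ (hnn τ hτ)
    have hdiss := sub_le_mul_integral_add_mul_of_hasDerivAt htT (fun s hs => hLd s (hnn s hs))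
      (intervalIntegrable_dotProduct_mulVec hSint v v) (α := -(γ * (ρ / (1 + ρ))))
      (β := γ * ρ * lamS * W) fun s hs => by
        have := mul_le_mul_of_nonneg_left (hlower s (Ioo_subset_Icc_self hs)) hγ.le
        linarith [ha s (hnn s (Ioo_subset_Icc_self hs))]
    rw [add_sub_cancel_left] at hdiss
    exact le_one_sub_sigmaOf_mul hρ hμ hT hγ hc hlamS.le hlam2
      (by simpa [euclNorm_sq] using (hL t ht v).2)
      (mul_mul_dotProduct_self_le_integral hT hSint (hPE t ht) v) hdiss
  · have hρ₀ : lam2 / (μ * T * γ) * μ * T * γ = lam2 := by field_simp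
    exact ⟨sigmaOf_eq_of_mul_eq hρ₀ hlam2.ne',
      sigmaOf_lt_one_of_mul_eq hρ₀ hlam2.ne' (by positivity) hc.le hγ.le hlamS.le⟩

/-- one-period contraction of the Lyapunov function.  Under the hypotheses
of the PE-Lyapunov exponential stability theorem, for every `ρ > 0` and every `t ≥ 0`,
`𝓛_x(t+T) ≤ (1 − σ(ρ)) 𝓛_x(t)` with `σ(ρ) = ρμTγ/((1+ρ)(1+ρcT²γλ_Σ)λ₂)`; with the
choice `ρ = λ₂/(μTγ)` one gets `σ = 1/((1+ρ)(1+ρcT²γλ_Σ)) < 1`. -/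
theorem stmt16
    (d : ℕ) (f : (Fin d → ℝ) → ℝ → (Fin d → ℝ)) (L : ℝ → (Fin d → ℝ) → ℝ)
    (Sig : ℝ → Matrix (Fin d) (Fin d) ℝ)
    (lam1 lam2 lamS γ c T μ : ℝ)
    (hlam1 : 0 < lam1) (hlam2 : 0 < lam2) (hlamS : 0 < lamS)
    (hγ : 0 < γ) (hc : 0 < c) (hT : 0 < T) (hμ : 0 < μ)
    (hf0 : ∀ t : ℝ, f 0 t = 0)
    (hSmeas : ∀ i j : Fin d, Measurable fun t => Sig t i j)
    (hSpsd : ∀ t : ℝ, 0 ≤ t → (Sig t).PosSemidef)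
    (hSbound : ∀ t : ℝ, 0 ≤ t → ∀ z : Fin d → ℝ,
      z ⬝ᵥ (Sig t).mulVec z ≤ lamS * (z ⬝ᵥ z))
    (hPE : ∀ t : ℝ, 0 ≤ t →
      ((T⁻¹ • Matrix.of fun i j => ∫ τ in t..(t + T), Sig τ i j) -
        μ • (1 : Matrix (Fin d) (Fin d) ℝ)).PosSemidef)
    (hL : ∀ t : ℝ, 0 ≤ t → ∀ z : Fin d → ℝ,
      lam1 * euclNorm z ^ 2 ≤ L t z ∧ L t z ≤ lam2 * euclNorm z ^ 2)
    (x : ℝ → (Fin d → ℝ)) (hsol : ∀ t : ℝ, 0 ≤ t → HasDerivAt x (f (x t) t) t)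
    (DL : ℝ → ℝ)
    (hLd : ∀ t : ℝ, 0 ≤ t → HasDerivAt (fun s => L s (x s)) (DL t) t)
    (ha : ∀ t : ℝ, 0 ≤ t → DL t ≤ -γ * (x t ⬝ᵥ (Sig t).mulVec (x t)))
    (hcc : ∀ t : ℝ, 0 ≤ t → DL t ≤ -(1 / c) * euclNorm (f (x t) t) ^ 2) :
    (∀ ρ : ℝ, 0 < ρ → ∀ t : ℝ, 0 ≤ t →
      L (t + T) (x (t + T)) ≤ (1 - sigmaOf ρ μ T γ c lamS lam2) * L t (x t)) ∧
    (sigmaOf (lam2 / (μ * T * γ)) μ T γ c lamS lam2 =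
        1 / ((1 + lam2 / (μ * T * γ)) *
          (1 + (lam2 / (μ * T * γ)) * c * T ^ 2 * γ * lamS)) ∧
      sigmaOf (lam2 / (μ * T * γ)) μ T γ c lamS lam2 < 1) :=
  stmt16_general d f L Sig lam1 lam2 lamS γ c T μ hlam2 hlamS hγ hc hT hμ hSmeas hSpsd hSbound hPE
    hL x hsol DL hLd ha hcc
end
end

section
/- Let y₁,…,y_m ∈ ℝ³ be unit vectors (m ≥ 1) and let k_p, k_d > 0 satisfy k_d > 1/m and k_p ≤ 4/m − 4/(k_d² m³). Then the 6×6 matrix Q = Σ_{j=1}^m [[ (k_p/(k_d m)) π_{y_j}, (k_p/2) π_{y_j} ],[ (k_p/2) π_{y_j}, (k_d − 1/(k_d m²)) I₃ ]] is positive semidefinite. -/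
open Matrix

noncomputable section

/-!
Each summand is positive semidefinite. Writing `x = (u, v)` and `π` for the orthogonal projection
`π_y`, its quadratic form is `a ‖πu‖² + 2b ⟪πu, πv⟫ + c ‖v‖²`, and `‖v‖² ≥ ‖πv‖²`, so it is enough
that the scalar form `a s² + 2b st + c t²` be nonnegative, i.e. `b² ≤ ac` with `a > 0`. For the gains
of the theorem, `ac = k_p/m − k_p/(k_d² m³) = (k_p/4)(4/m − 4/(k_d² m³)) ≥ k_p²/4 = b²`.
-/

theorem dotProduct_quadratic_nonneg {n : Type*} [Fintype n] {a b c : ℝ} (ha : 0 < a)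
    (h : b ^ 2 ≤ a * c) (p q : n → ℝ) :
    0 ≤ a * (p ⬝ᵥ p) + 2 * b * (p ⬝ᵥ q) + c * (q ⬝ᵥ q) := by
  have hsq : 0 ≤ (a • p + b • q) ⬝ᵥ (a • p + b • q) := by
    simpa using dotProduct_self_star_nonneg (a • p + b • q)
  have hq : 0 ≤ q ⬝ᵥ q := by simpa using dotProduct_self_star_nonneg q
  have hexpand : (a • p + b • q) ⬝ᵥ (a • p + b • q)
      = a * (a * (p ⬝ᵥ p) + 2 * b * (p ⬝ᵥ q) + c * (q ⬝ᵥ q)) - (a * c - b ^ 2) * (q ⬝ᵥ q) := by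
    simp only [add_dotProduct, dotProduct_add, smul_dotProduct, dotProduct_smul, smul_eq_mul,
      dotProduct_comm q p]
    ring
  nlinarith [mul_nonneg (sub_nonneg.2 h) hq]

namespace IsStarProjection

variable {n : Type*} [Fintype n] {P : Matrix n n ℝ}

theorem dotProduct_mulVec (hP : IsStarProjection P) (u v : n → ℝ) :
    u ⬝ᵥ (P *ᵥ v) = (P *ᵥ u) ⬝ᵥ (P *ᵥ v) := by
  have hPt : Pᵀ = P := by
    rw [← conjTranspose_eq_transpose_of_trivial]
    exact hP.isSelfAdjoint
  conv_lhs => rw [← hP.isIdempotentElem.eq, ← mulVec_mulVec, Matrix.dotProduct_mulVec,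
    ← mulVec_transpose, hPt]

theorem mulVec_dotProduct_mulVec_le [DecidableEq n] (hP : IsStarProjection P) (v : n → ℝ) :
    (P *ᵥ v) ⬝ᵥ (P *ᵥ v) ≤ v ⬝ᵥ v := by
  have hsplit : v ⬝ᵥ v = v ⬝ᵥ (P *ᵥ v) + v ⬝ᵥ ((1 - P) *ᵥ v) := by
    rw [sub_mulVec, one_mulVec, dotProduct_sub]
    ring
  have hrest : 0 ≤ ((1 - P) *ᵥ v) ⬝ᵥ ((1 - P) *ᵥ v) := by
    simpa using dotProduct_self_star_nonneg ((1 - P) *ᵥ v)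
  linarith [hP.dotProduct_mulVec v v, hP.one_sub.dotProduct_mulVec v v]

theorem posSemidef_fromBlocks_smul [DecidableEq n] (hP : IsStarProjection P) {a b c : ℝ} (ha : 0 < a)
    (h : b ^ 2 ≤ a * c) :
    (fromBlocks (a • P) (b • P) (b • P) (c • (1 : Matrix n n ℝ))).PosSemidef := by
  have hsa : ∀ r : ℝ, (r • P)ᴴ = r • P := fun r => by
    rw [conjTranspose_smul, star_trivial, ← star_eq_conjTranspose, hP.isSelfAdjoint.star_eq]
  have hc : 0 ≤ c := by nlinarith [sq_nonneg b]
  refine PosSemidef.of_dotProduct_mulVec_nonneg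
    (IsHermitian.fromBlocks (hsa a) (hsa b) (by simp)) fun x => ?_
  obtain ⟨u, v, rfl⟩ : ∃ u v, x = Sum.elim u v := ⟨_, _, (Sum.elim_comp_inl_inr x).symm⟩
  rw [fromBlocks_mulVec]
  simp only [star_trivial, sumElim_dotProduct_sumElim, smul_mulVec, one_mulVec, dotProduct_add,
    dotProduct_smul, smul_eq_mul, Sum.elim_comp_inl, Sum.elim_comp_inr]
  rw [hP.dotProduct_mulVec u u, hP.dotProduct_mulVec u v, hP.dotProduct_mulVec v u,
    dotProduct_comm (P *ᵥ v)]
  nlinarith [dotProduct_quadratic_nonneg ha h (P *ᵥ u) (P *ᵥ v),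
    mul_le_mul_of_nonneg_left (hP.mulVec_dotProduct_mulVec_le v) hc]

end IsStarProjection

theorem isStarProjection_proj {y : Fin 3 → ℝ} (hy : y ⬝ᵥ y = 1) : IsStarProjection (proj y) := by
  refine isStarProjection_one_sub_iff.2 ⟨?_, ?_⟩
  · rw [IsIdempotentElem, vecMulVec_mul_vecMulVec, hy, one_smul]
  · rw [IsSelfAdjoint, star_eq_conjTranspose, conjTranspose_vecMulVec, star_trivial]

theorem sq_half_le_gain_mul {m kp kd : ℝ} (hm : m ≠ 0) (hkd : kd ≠ 0) (hkp : 0 ≤ kp)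
    (hkple : kp ≤ 4 / m - 4 / (kd ^ 2 * m ^ 3)) :
    (kp / 2) ^ 2 ≤ kp / (kd * m) * (kd - 1 / (kd * m ^ 2)) := by
  have hprod : kp / (kd * m) * (kd - 1 / (kd * m ^ 2)) = kp / 4 * (4 / m - 4 / (kd ^ 2 * m ^ 3)) := by
    field_simp
  rw [hprod]
  nlinarith

theorem stmt18_general
    (m : ℕ) (hm : 1 ≤ m) (y : Fin m → (Fin 3 → ℝ)) (hy : ∀ i, y i ⬝ᵥ y i = 1)
    (kp kd : ℝ) (hkp : 0 < kp) (hkd0 : 0 < kd)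
    (hkple : kp ≤ 4 / (m : ℝ) - 4 / (kd ^ 2 * (m : ℝ) ^ 3)) :
    (∑ j, (Matrix.fromBlocks
        ((kp / (kd * (m : ℝ))) • proj (y j)) ((kp / 2) • proj (y j))
        ((kp / 2) • proj (y j)) ((kd - 1 / (kd * (m : ℝ) ^ 2)) • 1)
      : Matrix (Fin 3 ⊕ Fin 3) (Fin 3 ⊕ Fin 3) ℝ)).PosSemidef := by
  have hm0 : (0 : ℝ) < m := by exact_mod_cast hm
  have ha : 0 < kp / (kd * m) := by positivity
  have hb := sq_half_le_gain_mul hm0.ne' hkd0.ne' hkp.le hkple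
  exact posSemidef_sum _ fun j _ =>
    (isStarProjection_proj (hy j)).posSemidef_fromBlocks_smul ha hb

/-- positive semidefiniteness of the matrix `Q` of equation (10).  For unit
vectors `y₁,…,y_m` (`m ≥ 1`) and gains `k_p, k_d > 0` with `k_d > 1/m` and
`k_p ≤ 4/m − 4/(k_d²m³)`, the matrix
`Q = Σ_j [[ (k_p/(k_d m)) π_{y_j}, (k_p/2) π_{y_j} ],[ (k_p/2) π_{y_j}, (k_d − 1/(k_d m²)) I ]]`
is positive semidefinite. -/
theorem stmt18
    (m : ℕ) (hm : 1 ≤ m) (y : Fin m → (Fin 3 → ℝ)) (hy : ∀ i, y i ⬝ᵥ y i = 1)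
    (kp kd : ℝ) (hkp : 0 < kp) (hkd0 : 0 < kd)
    (hkd : kd > 1 / (m : ℝ)) (hkple : kp ≤ 4 / (m : ℝ) - 4 / (kd ^ 2 * (m : ℝ) ^ 3)) :
    (∑ j, (Matrix.fromBlocks
        ((kp / (kd * (m : ℝ))) • proj (y j)) ((kp / 2) • proj (y j))
        ((kp / 2) • proj (y j)) ((kd - 1 / (kd * (m : ℝ) ^ 2)) • 1)
      : Matrix (Fin 3 ⊕ Fin 3) (Fin 3 ⊕ Fin 3) ℝ)).PosSemidef :=
  stmt18_general m hm y hy kp kd hkp hkd0 hkple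
end
end
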